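/- arXiv:2506.04884 — 5 statements merged into one kernel-verified Lean document; each statement's English description precedes it below -/
import Mathlib

section
/- For all positive integers ν and Δ, every finite simple graph G whose matching number is at most ν and whose maximum degree is at most Δ satisfies e(G) ≤ ν(Δ+1), where e(G) is the number of edges of G. -/
open Finset Matrix

noncomputable section

/-- The book graph `B_{r+1}`: `r+1` triangles sharing a common edge, i.e. the join of an
edge (vertices `0, 1`) with an independent set of `r+1` vertices. -/
def bookGraph (r : ℕ) : SimpleGraph (Fin (r + 3)) :=
  SimpleGraph.fromRel (fun u _ => u.val < 2)

/-- `Free H G` means `G` contains no subgraph isomorphic to `H`, i.e. there is no injective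
graph homomorphism from `H` to `G`. -/
def Free {W V : Type*} (H : SimpleGraph W) (G : SimpleGraph V) : Prop :=
  ¬ ∃ f : H →g G, Function.Injective f

/-- The adjacency matrix of `G` over `ℝ` (with classical decidability of adjacency). -/
def adjMat {V : Type*} (G : SimpleGraph V) : Matrix V V ℝ :=
  letI : DecidableRel G.Adj := Classical.decRel _
  G.adjMatrix ℝ

/-- The spectral radius of a finite simple graph: the largest real eigenvalue of its
adjacency matrix. -/
def specRad {V : Type*} [Fintype V] (G : SimpleGraph V) : ℝ :=
  sSup {t : ℝ | ∃ v : V → ℝ, v ≠ 0 ∧ adjMat G *ᵥ v = t • v}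

/-- `Kstrr s t r` is the graph `K_{s,t}^{r,r}`: the complete bipartite graph with parts
`Fin s` and `Fin t`, together with one extra vertex (`none`) joined to exactly the first
`r` vertices of each part. -/
def Kstrr (s t r : ℕ) : SimpleGraph (Option (Fin s ⊕ Fin t)) :=
  SimpleGraph.fromRel (fun u v =>
    (∃ a b, u = some (Sum.inl a) ∧ v = some (Sum.inr b)) ∨
    (∃ a : Fin s, u = none ∧ v = some (Sum.inl a) ∧ a.val < r) ∨
    (∃ b : Fin t, u = none ∧ v = some (Sum.inr b) ∧ b.val < r))

/-- `degIn G S v` is the number of neighbours of `v` in the set `S`. -/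
def degIn {V : Type*} (G : SimpleGraph V) (S : Finset V) (v : V) : ℕ :=
  letI : DecidableRel G.Adj := Classical.decRel _
  (S.filter fun w => G.Adj v w).card

/-- `edgesIn G S` is the number of edges of `G` with both endpoints in `S`. -/
def edgesIn {V : Type*} [Fintype V] (G : SimpleGraph V) (S : Finset V) : ℕ :=
  letI := Classical.decEq V
  letI : DecidableRel G.Adj := Classical.decRel _
  letI : DecidablePred fun e : Sym2 V => ∀ v ∈ e, v ∈ S := Classical.decPred _
  (G.edgeFinset.filter fun e => ∀ v ∈ e, v ∈ S).card

/-- `edgeCount G` is the number of edges of `G`. -/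
def edgeCount {V : Type*} [Fintype V] (G : SimpleGraph V) : ℕ :=
  letI := Classical.decEq V
  letI : DecidableRel G.Adj := Classical.decRel _
  G.edgeFinset.card

/-- `edgesBetween G S T` is the number of pairs `(s, t) ∈ S × T` with `s` adjacent to `t`;
for disjoint `S` and `T` this is the number of edges between `S` and `T`. -/
def edgesBetween {V : Type*} (G : SimpleGraph V) (S T : Finset V) : ℕ :=
  letI : DecidableRel G.Adj := Classical.decRel _
  ((S ×ˢ T).filter fun p => G.Adj p.1 p.2).card

/-- `maxDeg G` is the maximum degree of `G`. -/
def maxDeg {V : Type*} [Fintype V] (G : SimpleGraph V) : ℕ :=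
  letI : DecidableRel G.Adj := Classical.decRel _
  G.maxDegree

/-- `matchingNumberOn G S` is the matching number of the subgraph of `G` induced by `S`:
the largest cardinality of a set of pairwise disjoint edges of `G` lying inside `S`. -/
def matchingNumberOn {V : Type*} (G : SimpleGraph V) (S : Finset V) : ℕ :=
  sSup {k | ∃ M : Finset (Sym2 V), ↑M ⊆ G.edgeSet ∧ (∀ e ∈ M, ∀ v ∈ e, v ∈ S) ∧
    M.card = k ∧ (M : Set (Sym2 V)).Pairwise fun e f => ∀ v, v ∈ e → v ∉ f}

/-- `matchingNumber G` is the matching number of `G`. -/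
def matchingNumber {V : Type*} [Fintype V] (G : SimpleGraph V) : ℕ :=
  matchingNumberOn G Finset.univ

end


/- ======================= auxiliary development ======================= -/

set_option linter.unusedSectionVars false

namespace CH

open SimpleGraph

variable {V : Type*}

/-- matching-as-finset predicate matching the bespoke `matchingNumberOn`. -/
def IsMS (G : SimpleGraph V) (M : Finset (Sym2 V)) : Prop :=
  ↑M ⊆ G.edgeSet ∧ (M : Set (Sym2 V)).Pairwise fun e f => ∀ v, v ∈ e → v ∉ f

lemma isMS_empty (G : SimpleGraph V) : IsMS G ∅ := by
  constructor <;> simp [IsMS]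

lemma matchingNumber_eq [Fintype V] (G : SimpleGraph V) :
    matchingNumber G = sSup {k | ∃ M : Finset (Sym2 V), IsMS G M ∧ M.card = k} := by
  unfold matchingNumber matchingNumberOn
  congr 1
  ext k
  constructor
  · rintro ⟨M, h1, -, h3, h4⟩; exact ⟨M, ⟨h1, h4⟩, h3⟩
  · rintro ⟨M, ⟨h1, h4⟩, h3⟩; exact ⟨M, h1, by simp, h3, h4⟩

lemma bddAbove_MN [Fintype V] (G : SimpleGraph V) :
    BddAbove {k | ∃ M : Finset (Sym2 V), IsMS G M ∧ M.card = k} := by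
  classical
  refine ⟨G.edgeSet.toFinset.card, ?_⟩
  rintro k ⟨M, hM, rfl⟩
  exact Finset.card_le_card (fun e he => Set.mem_toFinset.2 (hM.1 he))

lemma IsMS.card_le_nu [Fintype V] {G : SimpleGraph V} {M : Finset (Sym2 V)}
    (h : IsMS G M) : M.card ≤ matchingNumber G := by
  rw [matchingNumber_eq]
  exact le_csSup (bddAbove_MN G) ⟨M, h, rfl⟩

lemma exists_max_matching [Fintype V] (G : SimpleGraph V) :
    ∃ M : Finset (Sym2 V), IsMS G M ∧ M.card = matchingNumber G := by
  have h0 : {k | ∃ M : Finset (Sym2 V), IsMS G M ∧ M.card = k}.Nonempty :=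
    ⟨0, ∅, isMS_empty G, by simp⟩
  have := Nat.sSup_mem h0 (bddAbove_MN G)
  rw [matchingNumber_eq]
  exact this

section API
variable [Fintype V] {G : SimpleGraph V} {M : Finset (Sym2 V)}

lemma IsMS.unique_edge (h : IsMS G M) {e f : Sym2 V} (he : e ∈ M) (hf : f ∈ M)
    {v : V} (hve : v ∈ e) (hvf : v ∈ f) : e = f := by
  by_contra hne
  exact h.2 he hf hne v hve hvf

lemma IsMS.not_isDiag (h : IsMS G M) {e : Sym2 V} (he : e ∈ M) : ¬ e.IsDiag :=
  G.not_isDiag_of_mem_edgeSet (h.1 he)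

/-- the set of vertices covered by `M` has cardinality at most `2 * M.card`. -/
lemma IsMS.covered_card (h : IsMS G M) [DecidableEq V] :
    (Finset.univ.filter (fun v : V => ∃ e ∈ M, v ∈ e)).card ≤ 2 * M.card := by
  classical
  have hsub : (Finset.univ.filter (fun v : V => ∃ e ∈ M, v ∈ e)) ⊆
      M.biUnion (fun e => Finset.univ.filter (fun v => v ∈ e)) := by
    intro v hv
    rw [Finset.mem_filter] at hv
    obtain ⟨e, he, hve⟩ := hv.2
    exact Finset.mem_biUnion.2 ⟨e, he, by simp [hve]⟩
  refine le_trans (Finset.card_le_card hsub) ?_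
  refine le_trans (Finset.card_biUnion_le) ?_
  have hb : ∀ e ∈ M, (Finset.univ.filter (fun v => v ∈ e)).card ≤ 2 := by
    intro e _
    induction e using Sym2.ind with
    | _ a b =>
      refine le_trans (Finset.card_le_card (fun v hv => ?_)) (Finset.card_insert_le a {b} |>.trans (by simp))
      rw [Finset.mem_filter] at hv
      rcases Sym2.mem_iff.1 hv.2 with h | h <;> simp [h]
  calc (M.sum fun e => (Finset.univ.filter (fun v => v ∈ e)).card)
      ≤ M.sum (fun _ => 2) := Finset.sum_le_sum hb
    _ = 2 * M.card := by rw [Finset.sum_const, smul_eq_mul, mul_comm]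

end API

section Transfer
variable [Fintype V] [DecidableEq V]

open scoped Classical

/-- lifting a matching of an induced subgraph. -/
lemma IsMS.lift {s : Set V} {G : SimpleGraph V} {M : Finset (Sym2 s)}
    (h : IsMS (G.induce s) M) :
    IsMS G (M.image (Sym2.map (Subtype.val : s → V))) ∧
      (M.image (Sym2.map (Subtype.val : s → V))).card = M.card ∧
      (∀ e ∈ M.image (Sym2.map (Subtype.val : s → V)), ∀ v ∈ e, v ∈ s) := by
  classical
  have hinj : Function.Injective (Sym2.map (Subtype.val : s → V)) :=
    Sym2.map.injective Subtype.val_injective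
  refine ⟨⟨?_, ?_⟩, Finset.card_image_of_injective _ hinj, ?_⟩
  · intro e he
    simp only [Finset.coe_image, Set.mem_image, Finset.mem_coe] at he
    obtain ⟨e', he', rfl⟩ := he
    induction e' using Sym2.ind with
    | _ a b =>
      have := h.1 he'
      rw [SimpleGraph.mem_edgeSet] at this
      rw [Sym2.map_pair_eq, SimpleGraph.mem_edgeSet]
      exact this
  · intro e he f hf hef v hve hvf
    simp only [Finset.coe_image, Set.mem_image, Finset.mem_coe] at he hf
    obtain ⟨e', he', rfl⟩ := he
    obtain ⟨f', hf', rfl⟩ := hf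
    obtain ⟨a, ha, rfl⟩ := Sym2.mem_map.1 hve
    obtain ⟨b, hb, hab⟩ := Sym2.mem_map.1 hvf
    have : a = b := Subtype.val_injective hab.symm
    subst this
    exact h.2 he' hf' (fun hc => hef (by rw [hc])) a ha hb
  · intro e he v hv
    simp only [Finset.mem_image] at he
    obtain ⟨e', _, rfl⟩ := he
    obtain ⟨a, _, rfl⟩ := Sym2.mem_map.1 hv
    exact a.2

lemma nu_induce_le (G : SimpleGraph V) (s : Set V) [Fintype s] :
    matchingNumber (G.induce s) ≤ matchingNumber G := by
  obtain ⟨M, hM, hcard⟩ := exists_max_matching (G.induce s)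
  obtain ⟨h1, h2, -⟩ := hM.lift
  rw [← hcard, ← h2]
  exact h1.card_le_nu

/-- edge count of an induced subgraph counted inside the big graph. -/
lemma edgeFinset_induce_card (G : SimpleGraph V) (s : Set V) [Fintype s]
    [DecidableRel G.Adj] [DecidableRel (G.induce s).Adj] [DecidableEq V]
    [DecidablePred (fun e : Sym2 V => ∀ v ∈ e, v ∈ s)] :
    (G.induce s).edgeFinset.card
      = (G.edgeFinset.filter (fun e => ∀ v ∈ e, v ∈ s)).card := by
  classical
  refine Finset.card_bij (fun e _ => Sym2.map (Subtype.val : s → V) e) ?_ ?_ ?_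
  · intro e he
    rw [SimpleGraph.mem_edgeFinset] at he
    induction e using Sym2.ind with
    | _ a b =>
      rw [Finset.mem_filter]
      constructor
      · rw [SimpleGraph.mem_edgeFinset]
        exact he
      · intro v hv
        obtain ⟨x, _, rfl⟩ := Sym2.mem_map.1 hv
        exact x.2
  · intro e _ f _ hef
    exact Sym2.map.injective Subtype.val_injective hef
  · intro e he
    rw [Finset.mem_filter] at he
    induction e using Sym2.ind with
    | _ a b =>
      have ha : a ∈ s := he.2 a (by simp)
      have hb : b ∈ s := he.2 b (by simp)
      refine ⟨s(⟨a, ha⟩, ⟨b, hb⟩), ?_, rfl⟩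
      rw [SimpleGraph.mem_edgeFinset]
      have := he.1
      rw [SimpleGraph.mem_edgeFinset] at this
      exact this

lemma degree_induce_le (G : SimpleGraph V) (s : Set V) [Fintype s]
    [DecidableRel G.Adj] [DecidableRel (G.induce s).Adj] (v : s) :
    (G.induce s).degree v ≤ G.degree (v : V) := by
  classical
  rw [← SimpleGraph.card_neighborFinset_eq_degree, ← SimpleGraph.card_neighborFinset_eq_degree]
  refine Finset.card_le_card_of_injOn (Subtype.val) ?_ ?_
  · intro w hw
    rw [Finset.mem_coe, SimpleGraph.mem_neighborFinset] at hw ⊢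
    exact hw
  · intro a _ b _ hab
    exact Subtype.val_injective hab

end Transfer

section Alt
variable [Fintype V] [DecidableEq V] {G : SimpleGraph V} {M N : Finset (Sym2 V)}

lemma IsMS.exists_other (h : IsMS G M) {e : Sym2 V} (he : e ∈ M) {v : V} (hv : v ∈ e) :
    ∃ w, w ≠ v ∧ e = s(v, w) := by
  induction e using Sym2.ind with
  | _ a b =>
    have hd : a ≠ b := by
      intro hab
      exact h.not_isDiag he (by simp [hab])
    rcases Sym2.mem_iff.1 hv with rfl | rfl
    · exact ⟨b, fun hb => hd hb.symm, rfl⟩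
    · exact ⟨a, hd, Sym2.eq_swap⟩

lemma card_filter_even_odd (T : ℕ) :
    ((Finset.range T).filter (fun i => Even i)).card = (T + 1) / 2 ∧
    ((Finset.range T).filter (fun i => ¬ Even i)).card = T / 2 := by
  induction T with
  | zero => simp
  | succ n ih =>
    rw [Finset.range_add_one, Finset.filter_insert, Finset.filter_insert]
    by_cases h : Even n
    · rw [if_pos h, if_neg (by simpa using h), Finset.card_insert_of_notMem (by simp)]
      obtain ⟨k, rfl⟩ := h
      refine ⟨?_, ?_⟩ <;> omega
    · rw [if_neg h, if_pos h, Finset.card_insert_of_notMem (by simp)]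
      obtain ⟨k, hk⟩ := Nat.not_even_iff_odd.1 h
      subst hk
      refine ⟨?_, ?_⟩ <;> omega

/-- The alternating-path surgery: given a maximum matching `N` missing `z` and any
matching `M` covering `z`, there is a matching `M'` of the same size as `M` missing `z`
and missing every `M`-exposed vertex except possibly one. -/
lemma alt_surgery (hM : IsMS G M) (hN : IsMS G N)
    (hNmax : ∀ M'' : Finset (Sym2 V), IsMS G M'' → M''.card ≤ N.card)
    {z : V} (hzM : ∃ e ∈ M, z ∈ e) (hzN : ∀ e ∈ N, z ∉ e) :
    ∃ M' : Finset (Sym2 V), IsMS G M' ∧ M'.card = M.card ∧ (∀ e ∈ M', z ∉ e) ∧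
      ∃ t : V, ∀ x : V, x ≠ t → (∀ e ∈ M, x ∉ e) → (∀ e ∈ M', x ∉ e) := by
  classical
  set M0 : Finset (Sym2 V) := M \ N with hM0
  set N0 : Finset (Sym2 V) := N \ M with hN0
  -- alternating paths from z
  set AltP : (ℕ → V) → ℕ → Prop := fun y t =>
    y 0 = z ∧ (∀ i ≤ t, ∀ j ≤ t, y i = y j → i = j) ∧
    (∀ i < t, (Even i → s(y i, y (i+1)) ∈ M0) ∧ (¬ Even i → s(y i, y (i+1)) ∈ N0)) with hAltP
  obtain ⟨e0, he0M, hze0⟩ := hzM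
  obtain ⟨c, hcz, hce⟩ := hM.exists_other he0M hze0
  have he0M0 : e0 ∈ M0 := by
    rw [hM0, Finset.mem_sdiff]
    exact ⟨he0M, fun hc => hzN e0 hc hze0⟩
  have h1 : AltP (fun i => if i = 0 then z else c) 1 := by
    refine ⟨by simp, ?_, ?_⟩
    · intro i hi j hj hij
      interval_cases i <;> interval_cases j
      · rfl
      · simp only [if_pos rfl, if_neg one_ne_zero] at hij
        exact absurd hij.symm hcz
      · simp only [if_pos rfl, if_neg one_ne_zero] at hij
        exact absurd hij hcz
      · rfl
    · intro i hi
      interval_cases i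
      refine ⟨fun _ => ?_, fun h => absurd Even.zero h⟩
      simpa [← hce]
  have hbdd : BddAbove {t | ∃ y, AltP y t} := by
    refine ⟨Fintype.card V, ?_⟩
    rintro t ⟨y, hy⟩
    have hinj : Function.Injective (fun i : Fin (t+1) => y i) := by
      intro i j hij
      exact Fin.ext (hy.2.1 i (Nat.lt_succ_iff.1 i.2) j (Nat.lt_succ_iff.1 j.2) hij)
    have := Fintype.card_le_of_injective _ hinj
    simp only [Fintype.card_fin] at this
    omega
  set T := sSup {t | ∃ y, AltP y t} with hT
  have hTmem : T ∈ {t | ∃ y, AltP y t} := Nat.sSup_mem ⟨1, ⟨fun i => if i = 0 then z else c, h1⟩⟩ hbdd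
  have hT1 : 1 ≤ T := le_csSup hbdd ⟨fun i => if i = 0 then z else c, h1⟩
  have hTmax : ¬ ∃ y, AltP y (T + 1) := by
    intro h
    have := le_csSup hbdd h
    omega
  obtain ⟨y, hy0, hyinj, hyedge⟩ := hTmem
  -- every path vertex's unique N-edge is a path edge (with odd index)
  have hLN : ∀ a, a ≤ T → (¬ Even a → a < T) → ∀ f ∈ N, y a ∈ f →
      ∃ j, j < T ∧ ¬ Even j ∧ f = s(y j, y (j+1)) ∧ (a = j ∨ a = j + 1) := by
    intro a haT hside f hfN hyaf
    rcases Nat.eq_zero_or_pos a with rfl | ha0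
    · rw [hy0] at hyaf
      exact absurd hyaf (hzN f hfN)
    · by_cases hae : Even a
      · have hj : a - 1 < T := by omega
        have hodd : ¬ Even (a - 1) := by
          intro h
          obtain ⟨k, hk⟩ := h
          obtain ⟨m, hm⟩ := hae
          omega
        have hmem := (hyedge _ hj).2 hodd
        have hmemN := (Finset.mem_sdiff.1 hmem).1
        have hyain : y a ∈ s(y (a-1), y (a-1+1)) := by
          rw [show a - 1 + 1 = a by omega]
          exact Sym2.mem_iff.2 (Or.inr rfl)
        have heq := hN.unique_edge hfN hmemN hyaf hyain
        exact ⟨a - 1, hj, hodd, heq, Or.inr (by omega)⟩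
      · have haT' : a < T := hside hae
        have hmem := (hyedge a haT').2 hae
        have hmemN := (Finset.mem_sdiff.1 hmem).1
        have heq := hN.unique_edge hfN hmemN hyaf (Sym2.mem_iff.2 (Or.inl rfl))
        exact ⟨a, haT', hae, heq, Or.inl rfl⟩
  -- every path vertex's unique M-edge is a path edge (with even index)
  have hLM : ∀ a, a ≤ T → (Even a → a < T) → ∀ f ∈ M, y a ∈ f →
      ∃ j, j < T ∧ Even j ∧ f = s(y j, y (j+1)) ∧ (a = j ∨ a = j + 1) := by
    intro a haT hside f hfM hyaf
    rcases Nat.eq_zero_or_pos a with rfl | ha0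
    · have h0T : 0 < T := by omega
      have hmem := (hyedge 0 h0T).1 Even.zero
      have hmemM := (Finset.mem_sdiff.1 hmem).1
      have heq := hM.unique_edge hfM hmemM hyaf (Sym2.mem_iff.2 (Or.inl rfl))
      exact ⟨0, h0T, Even.zero, heq, Or.inl rfl⟩
    · by_cases hae : Even a
      · have haT' : a < T := hside hae
        have hmem := (hyedge a haT').1 hae
        have hmemM := (Finset.mem_sdiff.1 hmem).1
        have heq := hM.unique_edge hfM hmemM hyaf (Sym2.mem_iff.2 (Or.inl rfl))
        exact ⟨a, haT', hae, heq, Or.inl rfl⟩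
      · have hj : a - 1 < T := by omega
        have hev : Even (a - 1) := by
          obtain ⟨k, hk⟩ := Nat.not_even_iff_odd.1 hae
          exact ⟨k, by omega⟩
        have hmem := (hyedge _ hj).1 hev
        have hmemM := (Finset.mem_sdiff.1 hmem).1
        have hyain : y a ∈ s(y (a-1), y (a-1+1)) := by
          rw [show a - 1 + 1 = a by omega]
          exact Sym2.mem_iff.2 (Or.inr rfl)
        have heq := hM.unique_edge hfM hmemM hyaf hyain
        exact ⟨a - 1, hj, hev, heq, Or.inr (by omega)⟩
  -- generic extension: if the terminal vertex has a suitable new edge, contradiction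
  have hext : ∀ p : V, p ≠ y T → (∀ j, j ≤ T → p ≠ y j) →
      ((Even T → s(y T, p) ∈ M0) ∧ (¬ Even T → s(y T, p) ∈ N0)) → False := by
    intro p hpT hpnot hedge
    apply hTmax
    refine ⟨fun i => if i = T + 1 then p else y i, ?_, ?_, ?_⟩
    · beta_reduce
      rw [if_neg (show ¬(0 = T + 1) by omega)]
      exact hy0
    · intro i hi j hj hij
      beta_reduce at hij
      by_cases hiT : i = T + 1 <;> by_cases hjT : j = T + 1
      · omega
      · rw [if_pos hiT, if_neg hjT] at hij
        exact absurd hij (hpnot j (by omega))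
      · rw [if_neg hiT, if_pos hjT] at hij
        exact absurd hij.symm (hpnot i (by omega))
      · rw [if_neg hiT, if_neg hjT] at hij
        exact hyinj i (by omega) j (by omega) hij
    · intro i hi
      beta_reduce
      rcases lt_or_eq_of_le (Nat.lt_succ_iff.1 hi) with hiT | rfl
      · rw [if_neg (show ¬(i = T + 1) by omega), if_neg (show ¬(i + 1 = T + 1) by omega)]
        exact hyedge i hiT
      · rw [if_neg (show ¬(T = T + 1) by omega), if_pos rfl]
        exact hedge
  -- if T is odd, y T is N-exposed
  have hTN : ¬ Even T → ∀ f ∈ N, y T ∉ f := by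
    intro hoddT f hfN hyTf
    have hEvT : Even (T - 1) := by
      obtain ⟨k, hk⟩ := Nat.not_even_iff_odd.1 hoddT
      exact ⟨k, by omega⟩
    have hfN0 : f ∈ N0 := by
      rw [hN0, Finset.mem_sdiff]
      refine ⟨hfN, fun hfM => ?_⟩
      have hT1' : T - 1 < T := by omega
      have hmem := (hyedge _ hT1').1 hEvT
      have hmemM := (Finset.mem_sdiff.1 hmem).1
      have hyT : y T ∈ s(y (T-1), y (T-1+1)) := by
        rw [show T - 1 + 1 = T by omega]
        exact Sym2.mem_iff.2 (Or.inr rfl)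
      have heq := hM.unique_edge hfM hmemM hyTf hyT
      have hnot := (Finset.mem_sdiff.1 hmem).2
      rw [heq] at hfN
      exact hnot hfN
    obtain ⟨p, hpneq, hfp⟩ := hN.exists_other hfN hyTf
    have hpnot : ∀ j, j ≤ T → p ≠ y j := by
      intro j hj hpj
      rcases eq_or_lt_of_le hj with rfl | hjT
      · exact hpneq hpj
      · have hyjf : y j ∈ f := by
          rw [hfp, ← hpj]
          exact Sym2.mem_iff.2 (Or.inr rfl)
        obtain ⟨j', hj'T, hodd', heq', _⟩ := hLN j hj (fun _ => hjT) f hfN hyjf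
        have hyTmem : y T ∈ s(y j', y (j'+1)) := heq' ▸ hyTf
        rcases Sym2.mem_iff.1 hyTmem with h | h
        · have := hyinj T le_rfl j' (le_of_lt hj'T) h
          omega
        · have := hyinj T le_rfl (j'+1) (by omega) h
          have hj'e : j' = T - 1 := by omega
          rw [hj'e] at hodd'
          exact hodd' hEvT
    refine hext p (hpnot T le_rfl) hpnot ⟨fun h => absurd h hoddT, fun _ => ?_⟩
    rw [← hfp]
    exact hfN0
  -- if T is even, y T is M-exposed
  have hTM : Even T → ∀ f ∈ M, y T ∉ f := by
    intro hevT f hfM hyTf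
    have hOddT : ¬ Even (T - 1) := by
      intro h
      obtain ⟨k, hk⟩ := h
      obtain ⟨m, hm⟩ := hevT
      omega
    have hfM0 : f ∈ M0 := by
      rw [hM0, Finset.mem_sdiff]
      refine ⟨hfM, fun hfNmem => ?_⟩
      have hT1' : T - 1 < T := by omega
      have hmem := (hyedge _ hT1').2 hOddT
      have hmemN := (Finset.mem_sdiff.1 hmem).1
      have hyT : y T ∈ s(y (T-1), y (T-1+1)) := by
        rw [show T - 1 + 1 = T by omega]
        exact Sym2.mem_iff.2 (Or.inr rfl)
      have heq := hN.unique_edge hfNmem hmemN hyTf hyT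
      have hnot := (Finset.mem_sdiff.1 hmem).2
      rw [heq] at hfM
      exact hnot hfM
    obtain ⟨p, hpneq, hfp⟩ := hM.exists_other hfM hyTf
    have hpnot : ∀ j, j ≤ T → p ≠ y j := by
      intro j hj hpj
      rcases eq_or_lt_of_le hj with rfl | hjT
      · exact hpneq hpj
      · have hyjf : y j ∈ f := by
          rw [hfp, ← hpj]
          exact Sym2.mem_iff.2 (Or.inr rfl)
        obtain ⟨j', hj'T, hev', heq', _⟩ := hLM j hj (fun _ => hjT) f hfM hyjf
        have hyTmem : y T ∈ s(y j', y (j'+1)) := heq' ▸ hyTf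
        rcases Sym2.mem_iff.1 hyTmem with h | h
        · have := hyinj T le_rfl j' (le_of_lt hj'T) h
          omega
        · have := hyinj T le_rfl (j'+1) (by omega) h
          have hj'e : j' = T - 1 := by omega
          rw [hj'e] at hev'
          exact hOddT hev'
    refine hext p (hpnot T le_rfl) hpnot ⟨fun _ => ?_, fun h => absurd hevT h⟩
    rw [← hfp]
    exact hfM0
  -- the finsets of path edges
  set EM : Finset (Sym2 V) := ((Finset.range T).filter (fun i => Even i)).image
      (fun i => s(y i, y (i+1))) with hEM
  set EN : Finset (Sym2 V) := ((Finset.range T).filter (fun i => ¬ Even i)).image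
      (fun i => s(y i, y (i+1))) with hENdef
  have hinjE : ∀ i ∈ Finset.range T, ∀ j ∈ Finset.range T,
      s(y i, y (i+1)) = s(y j, y (j+1)) → i = j := by
    intro i hi j hj hij
    rw [Finset.mem_range] at hi hj
    rcases Sym2.eq_iff.1 hij with ⟨h1, -⟩ | ⟨h1, h2⟩
    · exact hyinj i (by omega) j (by omega) h1
    · have e1 := hyinj i (by omega) (j+1) (by omega) h1
      have e2 := hyinj (i+1) (by omega) j (by omega) h2
      omega
  have hEMcard : EM.card = (T + 1) / 2 := by
    rw [hEM, Finset.card_image_of_injOn (fun i hi j hj =>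
      hinjE i (Finset.mem_of_mem_filter _ hi) j (Finset.mem_of_mem_filter _ hj)),
      (card_filter_even_odd T).1]
  have hENcard : EN.card = T / 2 := by
    rw [hENdef, Finset.card_image_of_injOn (fun i hi j hj =>
      hinjE i (Finset.mem_of_mem_filter _ hi) j (Finset.mem_of_mem_filter _ hj)),
      (card_filter_even_odd T).2]
  have hEMsub : EM ⊆ M0 := by
    intro e he
    obtain ⟨i, hi, rfl⟩ := Finset.mem_image.1 he
    rw [Finset.mem_filter, Finset.mem_range] at hi
    exact (hyedge i hi.1).1 hi.2
  have hENsub : EN ⊆ N0 := by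
    intro e he
    obtain ⟨i, hi, rfl⟩ := Finset.mem_image.1 he
    rw [Finset.mem_filter, Finset.mem_range] at hi
    exact (hyedge i hi.1).2 hi.2
  -- each non-terminal path vertex is M-covered
  have hcov : ∀ a, a < T → ∃ g ∈ M, y a ∈ g := by
    intro a ha
    by_cases hae : Even a
    · exact ⟨s(y a, y (a+1)), (Finset.mem_sdiff.1 ((hyedge a ha).1 hae)).1,
        Sym2.mem_iff.2 (Or.inl rfl)⟩
    · obtain ⟨k, hk⟩ := Nat.not_even_iff_odd.1 hae
      have ha1 : a - 1 < T := by omega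
      have hev : Even (a - 1) := ⟨k, by omega⟩
      refine ⟨s(y (a-1), y (a-1+1)), (Finset.mem_sdiff.1 ((hyedge _ ha1).1 hev)).1, ?_⟩
      rw [show a - 1 + 1 = a by omega]
      exact Sym2.mem_iff.2 (Or.inr rfl)
  by_cases hTpar : Even T
  · -- T even : perform the surgery on M
    have hNoTouch : ∀ f ∈ M \ EM, ∀ a, a ≤ T → y a ∉ f := by
      intro f hf a ha hyaf
      rcases eq_or_lt_of_le ha with rfl | haT
      · exact hTM hTpar f (Finset.mem_sdiff.1 hf).1 hyaf
      · obtain ⟨j, hjT, hjev, rfl, -⟩ :=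
          hLM a ha (fun _ => haT) f (Finset.mem_sdiff.1 hf).1 hyaf
        exact (Finset.mem_sdiff.1 hf).2 (Finset.mem_image.2
          ⟨j, Finset.mem_filter.2 ⟨Finset.mem_range.2 hjT, hjev⟩, rfl⟩)
    set M' : Finset (Sym2 V) := (M \ EM) ∪ EN with hM'def
    have hU : ∀ e ∈ M', ∀ f ∈ M', ∀ v : V, v ∈ e → v ∈ f → e = f := by
      intro e he f hf v hve hvf
      rcases Finset.mem_union.1 he with heM | heEN <;>
        rcases Finset.mem_union.1 hf with hfM | hfEN
      · exact hM.unique_edge (Finset.mem_sdiff.1 heM).1 (Finset.mem_sdiff.1 hfM).1 hve hvf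
      · obtain ⟨i, hifil, rfl⟩ := Finset.mem_image.1 hfEN
        rw [Finset.mem_filter, Finset.mem_range] at hifil
        exfalso
        rcases Sym2.mem_iff.1 hvf with rfl | rfl
        · exact hNoTouch e heM i (by omega) hve
        · exact hNoTouch e heM (i+1) (by omega) hve
      · obtain ⟨i, hifil, rfl⟩ := Finset.mem_image.1 heEN
        rw [Finset.mem_filter, Finset.mem_range] at hifil
        exfalso
        rcases Sym2.mem_iff.1 hve with rfl | rfl
        · exact hNoTouch f hfM i (by omega) hvf
        · exact hNoTouch f hfM (i+1) (by omega) hvf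
      · obtain ⟨i, hifil, rfl⟩ := Finset.mem_image.1 heEN
        obtain ⟨j, hjfil, rfl⟩ := Finset.mem_image.1 hfEN
        rw [Finset.mem_filter, Finset.mem_range] at hifil hjfil
        have hij : i = j := by
          obtain ⟨k, hk⟩ := Nat.not_even_iff_odd.1 hifil.2
          obtain ⟨m, hm⟩ := Nat.not_even_iff_odd.1 hjfil.2
          rcases Sym2.mem_iff.1 hve with rfl | h1 <;>
            rcases Sym2.mem_iff.1 hvf with h2 | h2
          · have := hyinj i (by omega) j (by omega) h2
            omega
          · have := hyinj i (by omega) (j+1) (by omega) h2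
            omega
          · have := hyinj (i+1) (by omega) j (by omega) (h1.symm.trans h2)
            omega
          · have := hyinj (i+1) (by omega) (j+1) (by omega) (h1.symm.trans h2)
            omega
        rw [hij]
    have hM'MS : IsMS G M' := by
      constructor
      · intro e he
        rcases Finset.mem_union.1 he with h | h
        · exact hM.1 (Finset.mem_sdiff.1 h).1
        · exact hN.1 (Finset.mem_sdiff.1 (hENsub h)).1
      · intro e he f hf hef v hve hvf
        exact hef (hU e he f hf v hve hvf)
    have hdisj : Disjoint (M \ EM) EN := by
      rw [Finset.disjoint_left]
      intro e he hee
      exact (Finset.mem_sdiff.1 (hENsub hee)).2 (Finset.mem_sdiff.1 he).1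
    have hEMM : EM ⊆ M := fun e he => (Finset.mem_sdiff.1 (hEMsub he)).1
    have hcard : M'.card = M.card := by
      rw [hM'def, Finset.card_union_of_disjoint hdisj, Finset.card_sdiff_of_subset hEMM,
        hEMcard, hENcard]
      have hle := Finset.card_le_card hEMM
      rw [hEMcard] at hle
      obtain ⟨k, hk⟩ := hTpar
      omega
    refine ⟨M', hM'MS, hcard, ?_, y T, ?_⟩
    · intro e he hze
      rcases Finset.mem_union.1 he with h | h
      · have := hNoTouch e h 0 (by omega)
        rw [hy0] at this
        exact this hze
      · exact hzN e (Finset.mem_sdiff.1 (hENsub h)).1 hze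
    · intro x hxT hxexp e he hxe
      rcases Finset.mem_union.1 he with h | h
      · exact hxexp e (Finset.mem_sdiff.1 h).1 hxe
      · obtain ⟨i, hifil, rfl⟩ := Finset.mem_image.1 h
        rw [Finset.mem_filter, Finset.mem_range] at hifil
        have : ∀ a, a ≤ T → x = y a → False := by
          intro a ha hxa
          rcases eq_or_lt_of_le ha with rfl | haT
          · exact hxT hxa
          · obtain ⟨g, hg, hyg⟩ := hcov a haT
            rw [← hxa] at hyg
            exact hxexp g hg hyg
        rcases Sym2.mem_iff.1 hxe with rfl | rfl
        · exact this i (by omega) rfl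
        · exact this (i+1) (by omega) rfl
  · -- T odd : augment N, contradiction
    exfalso
    have hNoTouchN : ∀ f ∈ N \ EN, ∀ a, a ≤ T → y a ∉ f := by
      intro f hf a ha hyaf
      rcases eq_or_lt_of_le ha with rfl | haT
      · exact hTN hTpar f (Finset.mem_sdiff.1 hf).1 hyaf
      · obtain ⟨j, hjT, hjodd, rfl, -⟩ :=
          hLN a ha (fun _ => haT) f (Finset.mem_sdiff.1 hf).1 hyaf
        exact (Finset.mem_sdiff.1 hf).2 (Finset.mem_image.2
          ⟨j, Finset.mem_filter.2 ⟨Finset.mem_range.2 hjT, hjodd⟩, rfl⟩)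
    set N' : Finset (Sym2 V) := (N \ EN) ∪ EM with hN'def
    have hU : ∀ e ∈ N', ∀ f ∈ N', ∀ v : V, v ∈ e → v ∈ f → e = f := by
      intro e he f hf v hve hvf
      rcases Finset.mem_union.1 he with heN | heEM <;>
        rcases Finset.mem_union.1 hf with hfN | hfEM
      · exact hN.unique_edge (Finset.mem_sdiff.1 heN).1 (Finset.mem_sdiff.1 hfN).1 hve hvf
      · obtain ⟨i, hifil, rfl⟩ := Finset.mem_image.1 hfEM
        rw [Finset.mem_filter, Finset.mem_range] at hifil
        exfalso
        rcases Sym2.mem_iff.1 hvf with rfl | rfl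
        · exact hNoTouchN e heN i (by omega) hve
        · exact hNoTouchN e heN (i+1) (by omega) hve
      · obtain ⟨i, hifil, rfl⟩ := Finset.mem_image.1 heEM
        rw [Finset.mem_filter, Finset.mem_range] at hifil
        exfalso
        rcases Sym2.mem_iff.1 hve with rfl | rfl
        · exact hNoTouchN f hfN i (by omega) hvf
        · exact hNoTouchN f hfN (i+1) (by omega) hvf
      · obtain ⟨i, hifil, rfl⟩ := Finset.mem_image.1 heEM
        obtain ⟨j, hjfil, rfl⟩ := Finset.mem_image.1 hfEM
        rw [Finset.mem_filter, Finset.mem_range] at hifil hjfil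
        have hij : i = j := by
          obtain ⟨k, hk⟩ := hifil.2
          obtain ⟨m, hm⟩ := hjfil.2
          rcases Sym2.mem_iff.1 hve with rfl | h1 <;>
            rcases Sym2.mem_iff.1 hvf with h2 | h2
          · have := hyinj i (by omega) j (by omega) h2
            omega
          · have := hyinj i (by omega) (j+1) (by omega) h2
            omega
          · have := hyinj (i+1) (by omega) j (by omega) (h1.symm.trans h2)
            omega
          · have := hyinj (i+1) (by omega) (j+1) (by omega) (h1.symm.trans h2)
            omega
        rw [hij]
    have hN'MS : IsMS G N' := by
      constructor
      · intro e he
        rcases Finset.mem_union.1 he with h | h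
        · exact hN.1 (Finset.mem_sdiff.1 h).1
        · exact hM.1 (Finset.mem_sdiff.1 (hEMsub h)).1
      · intro e he f hf hef v hve hvf
        exact hef (hU e he f hf v hve hvf)
    have hdisj : Disjoint (N \ EN) EM := by
      rw [Finset.disjoint_left]
      intro e he hee
      exact (Finset.mem_sdiff.1 (hEMsub hee)).2 (Finset.mem_sdiff.1 he).1
    have hENN : EN ⊆ N := fun e he => (Finset.mem_sdiff.1 (hENsub he)).1
    have hcard : N'.card = N.card + 1 := by
      rw [hN'def, Finset.card_union_of_disjoint hdisj, Finset.card_sdiff_of_subset hENN,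
        hEMcard, hENcard]
      have hle := Finset.card_le_card hENN
      rw [hENcard] at hle
      obtain ⟨k, hk⟩ := Nat.not_even_iff_odd.1 hTpar
      omega
    have := hNmax N' hN'MS
    omega

end Alt

section Gallai
variable [Fintype V] [DecidableEq V] {G : SimpleGraph V}

lemma gallai (hconn : G.Connected)
    (hness : ∀ z : V, ∃ N : Finset (Sym2 V), IsMS G N ∧ N.card = matchingNumber G ∧
      ∀ e ∈ N, z ∉ e) :
    Fintype.card V ≤ 2 * matchingNumber G + 1 := by
  classical
  by_contra hcard
  push_neg at hcard
  -- every maximum matching has two distinct exposed vertices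
  have hexp : ∀ M : Finset (Sym2 V), IsMS G M → M.card = matchingNumber G →
      ∃ u w : V, u ≠ w ∧ (∀ e ∈ M, u ∉ e) ∧ (∀ e ∈ M, w ∉ e) := by
    intro M hM hMc
    have h1 := hM.covered_card
    have h2 := Finset.card_filter_add_card_filter_not
      (s := (Finset.univ : Finset V)) (p := fun v : V => ∃ e ∈ M, v ∈ e)
    rw [Finset.card_univ] at h2
    have hX : 1 < (Finset.univ.filter (fun v : V => ¬ ∃ e ∈ M, v ∈ e)).card := by omega
    obtain ⟨u, hu, w, hw, huw⟩ := Finset.one_lt_card.1 hX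
    rw [Finset.mem_filter] at hu hw
    exact ⟨u, w, huw, fun e he hue => hu.2 ⟨e, he, hue⟩, fun e he hwe => hw.2 ⟨e, he, hwe⟩⟩
  -- adjacent exposed vertices of a maximum matching are impossible
  have hadj_aug : ∀ M' : Finset (Sym2 V), IsMS G M' → M'.card = matchingNumber G →
      ∀ a b : V, (∀ e ∈ M', a ∉ e) → (∀ e ∈ M', b ∉ e) → ¬ G.Adj a b := by
    intro M' hM' hM'c a b ha hb hadj
    have hnotmem : s(a, b) ∉ M' := fun h => ha _ h (Sym2.mem_iff.2 (Or.inl rfl))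
    have hins : IsMS G (insert s(a,b) M') := by
      constructor
      · intro e he
        rcases Finset.mem_insert.1 (Finset.mem_coe.1 he) with rfl | h
        · exact hadj
        · exact hM'.1 h
      · intro e he f hf hef v hve hvf
        rw [Finset.coe_insert, Set.mem_insert_iff] at he hf
        rcases he with rfl | he <;> rcases hf with rfl | hf
        · exact hef rfl
        · rcases Sym2.mem_iff.1 hve with rfl | rfl
          · exact ha f hf hvf
          · exact hb f hf hvf
        · rcases Sym2.mem_iff.1 hvf with rfl | rfl
          · exact ha e he hve
          · exact hb e he hve
        · exact hM'.2 he hf hef v hve hvf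
    have hle := hins.card_le_nu
    rw [Finset.card_insert_of_notMem hnotmem, hM'c] at hle
    omega
  -- minimize distance between exposed pairs over all maximum matchings
  set D := {d : ℕ | ∃ M : Finset (Sym2 V), IsMS G M ∧ M.card = matchingNumber G ∧
    ∃ u w : V, u ≠ w ∧ (∀ e ∈ M, u ∉ e) ∧ (∀ e ∈ M, w ∉ e) ∧ G.dist u w = d} with hD
  have hDne : D.Nonempty := by
    obtain ⟨M, hM, hMc⟩ := exists_max_matching G
    obtain ⟨u, w, huw, hu, hw⟩ := hexp M hM hMc
    exact ⟨G.dist u w, M, hM, hMc, u, w, huw, hu, hw, rfl⟩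
  obtain ⟨M, hM, hMc, u, w, huw, huexp, hwexp, hdist⟩ := Nat.sInf_mem hDne
  set d0 := sInf D with hd0def
  have hreach : G.Reachable u w := hconn.preconnected u w
  have hd0 : 2 ≤ d0 := by
    have hpos : 0 < G.dist u w := hreach.pos_dist_of_ne huw
    rcases Nat.lt_or_ge (G.dist u w) 2 with h | h
    · have h1 : G.dist u w = 1 := by omega
      exact absurd (SimpleGraph.dist_eq_one_iff_adj.1 h1)
        (hadj_aug M hM hMc u w huexp hwexp)
    · omega
  obtain ⟨p, hp⟩ := hreach.exists_walk_length_eq_dist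
  rw [hdist] at hp
  cases p with
  | nil =>
    simp only [SimpleGraph.Walk.length_nil] at hp
    omega
  | cons hadj q =>
    rename_i z
    simp only [SimpleGraph.Walk.length_cons] at hp
    have hzu : z ≠ u := hadj.ne'
    have hqlen : q.length = d0 - 1 := by omega
    have hdzw : G.dist z w ≤ d0 - 1 := le_trans (SimpleGraph.dist_le q) (by omega)
    have hzw : z ≠ w := by
      rintro rfl
      have := SimpleGraph.dist_eq_one_iff_adj.2 hadj
      omega
    have hduz : G.dist u z = 1 := SimpleGraph.dist_eq_one_iff_adj.2 hadj
    -- z must be covered by M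
    have hzM : ∃ e ∈ M, z ∈ e := by
      by_contra hzexp
      push_neg at hzexp
      have hmem : (1 : ℕ) ∈ D :=
        ⟨M, hM, hMc, u, z, fun h => hzu h.symm, huexp, hzexp, hduz⟩
      have := Nat.sInf_le hmem
      omega
    obtain ⟨N, hN, hNc, hzN⟩ := hness z
    have hNmax : ∀ M'' : Finset (Sym2 V), IsMS G M'' → M''.card ≤ N.card := by
      intro M'' hM''
      rw [hNc]
      exact hM''.card_le_nu
    obtain ⟨M', hM', hM'c, hzM', t, ht⟩ := alt_surgery hM hN hNmax hzM hzN
    have hM'max : M'.card = matchingNumber G := hM'c.trans hMc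
    by_cases hut : u = t
    · -- use the pair (z, w) for M'
      have hwt : w ≠ t := fun h => huw (hut.trans h.symm)
      have hwexp' : ∀ e ∈ M', w ∉ e := ht w hwt hwexp
      have hmem : G.dist z w ∈ D := ⟨M', hM', hM'max, z, w, hzw, hzM', hwexp', rfl⟩
      have := Nat.sInf_le hmem
      omega
    · -- use the pair (z, u) for M'
      have huexp' : ∀ e ∈ M', u ∉ e := ht u hut huexp
      have hdzu : G.dist z u = 1 := by
        rw [SimpleGraph.dist_comm]
        exact hduz
      have hmem : G.dist z u ∈ D := ⟨M', hM', hM'max, z, u, hzu, hzM', huexp', rfl⟩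
      have := Nat.sInf_le hmem
      omega

end Gallai

section Split
variable [Fintype V] [DecidableEq V] {G : SimpleGraph V}

lemma nu_pos_of_edge {e : Sym2 V} (he : e ∈ G.edgeSet) : 1 ≤ matchingNumber G := by
  classical
  have h : IsMS G {e} := by
    constructor
    · intro f hf
      rw [Finset.coe_singleton, Set.mem_singleton_iff] at hf
      rw [hf]
      exact he
    · intro f hf g hg hfg
      rw [Finset.coe_singleton, Set.mem_singleton_iff] at hf hg
      exact absurd (hf.trans hg.symm) hfg
  have := h.card_le_nu
  simpa using this

lemma edge_card_delete [DecidableRel G.Adj] (v : V)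
    [DecidableRel (G.induce ({v}ᶜ : Set V)).Adj] :
    G.edgeFinset.card = (G.induce ({v}ᶜ : Set V)).edgeFinset.card + G.degree v := by
  classical
  rw [edgeFinset_induce_card G ({v}ᶜ : Set V)]
  have h1 : (G.edgeFinset.filter (fun e => ∀ x ∈ e, x ∈ ({v}ᶜ : Set V)))
      = G.edgeFinset.filter (fun e => ¬ (v ∈ e)) := by
    apply Finset.filter_congr
    intro e _
    simp only [Set.mem_compl_iff, Set.mem_singleton_iff]
    constructor
    · intro h hv
      exact h v hv rfl
    · intro hv x hx hxv
      exact hv (hxv ▸ hx)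
  rw [h1]
  have h2 := Finset.card_filter_add_card_filter_not
    (s := G.edgeFinset) (p := fun e => v ∈ e)
  have h3 : (G.edgeFinset.filter (fun e => v ∈ e)) = G.incidenceFinset v := by
    rw [SimpleGraph.incidenceFinset_eq_filter]
  rw [h3, SimpleGraph.card_incidenceFinset_eq_degree] at h2
  omega

lemma edge_card_split [DecidableRel G.Adj] (s : Set V) [Fintype s] [Fintype (sᶜ : Set V)]
    [DecidableRel (G.induce s).Adj] [DecidableRel (G.induce sᶜ).Adj]
    [DecidablePred (fun e : Sym2 V => ∀ v ∈ e, v ∈ s)]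
    [DecidablePred (fun e : Sym2 V => ∀ v ∈ e, v ∈ sᶜ)]
    (hcl : ∀ a b : V, G.Adj a b → a ∈ s → b ∈ s) :
    G.edgeFinset.card
      = (G.induce s).edgeFinset.card + (G.induce sᶜ).edgeFinset.card := by
  classical
  rw [edgeFinset_induce_card G s, edgeFinset_induce_card G sᶜ]
  have h1 : (G.edgeFinset.filter (fun e => ∀ x ∈ e, x ∈ sᶜ))
      = G.edgeFinset.filter (fun e => ¬ ∀ x ∈ e, x ∈ s) := by
    apply Finset.filter_congr
    intro e he
    rw [SimpleGraph.mem_edgeFinset] at he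
    induction e using Sym2.ind with
    | _ a b =>
      have hadj : G.Adj a b := he
      constructor
      · intro h hall
        exact (h a (Sym2.mem_iff.2 (Or.inl rfl))) (hall a (Sym2.mem_iff.2 (Or.inl rfl)))
      · intro h x hx
        have hab : a ∉ s ∧ b ∉ s := by
          by_cases has : a ∈ s
          · exact absurd (fun x hx => by
              rcases Sym2.mem_iff.1 hx with rfl | rfl
              · exact has
              · exact hcl a x hadj has) h
          · refine ⟨has, fun hbs => has (hcl b a hadj.symm hbs)⟩
        rcases Sym2.mem_iff.1 hx with rfl | rfl
        · exact hab.1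
        · exact hab.2
  rw [h1]
  exact (Finset.card_filter_add_card_filter_not
    (s := G.edgeFinset) (p := fun e => ∀ x ∈ e, x ∈ s)).symm

lemma nu_split (s : Set V) [Fintype s] [Fintype (sᶜ : Set V)] :
    matchingNumber (G.induce s) + matchingNumber (G.induce sᶜ)
      ≤ matchingNumber G := by
  classical
  obtain ⟨MA, hMA, hMAc⟩ := exists_max_matching (G.induce s)
  obtain ⟨MB, hMB, hMBc⟩ := exists_max_matching (G.induce sᶜ)
  obtain ⟨hA, hAcard, hAmem⟩ := hMA.lift
  obtain ⟨hB, hBcard, hBmem⟩ := hMB.lift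
  set A' := MA.image (Sym2.map (Subtype.val : s → V)) with hA'
  set B' := MB.image (Sym2.map (Subtype.val : (sᶜ : Set V) → V)) with hB'
  have hmemside : ∀ e : Sym2 V, (∃ a : V, a ∈ e) := by
    intro e
    induction e using Sym2.ind with
    | _ a b => exact ⟨a, Sym2.mem_iff.2 (Or.inl rfl)⟩
  have hdisj : Disjoint A' B' := by
    rw [Finset.disjoint_left]
    intro e heA heB
    obtain ⟨a, ha⟩ := hmemside e
    exact (hBmem e heB a ha) (hAmem e heA a ha)
  have hunion : IsMS G (A' ∪ B') := by
    constructor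
    · intro e he
      rcases Finset.mem_union.1 (Finset.mem_coe.1 he) with h | h
      · exact hA.1 h
      · exact hB.1 h
    · intro e he f hf hef v hve hvf
      rw [Finset.coe_union, Set.mem_union] at he hf
      rcases he with he | he <;> rcases hf with hf | hf
      · exact hA.2 he hf hef v hve hvf
      · exact (hBmem f hf v hvf) (hAmem e he v hve)
      · exact (hBmem e he v hve) (hAmem f hf v hvf)
      · exact hB.2 he hf hef v hve hvf
  have := hunion.card_le_nu
  rw [Finset.card_union_of_disjoint hdisj, hAcard, hBcard, hMAc, hMBc] at this
  exact this

end Split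

section Main

universe u

lemma main_bound (n : ℕ) : ∀ (V : Type u) [Fintype V] [DecidableEq V] (G : SimpleGraph V)
    [DecidableRel G.Adj] (Δ : ℕ), Fintype.card V = n → (∀ v, G.degree v ≤ Δ) →
    G.edgeFinset.card ≤ matchingNumber G * (Δ + 1) := by
  induction n using Nat.strong_induction_on with
  | _ n IH =>
    intro V _ _ G _ Δ hn hdeg
    classical
    by_cases hE : G.edgeFinset.card = 0
    · rw [hE]
      exact Nat.zero_le _
    have hne : G.edgeFinset.Nonempty := Finset.card_pos.1 (by omega)
    obtain ⟨e0, he0⟩ := hne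
    have hν1 : 1 ≤ matchingNumber G := nu_pos_of_edge (SimpleGraph.mem_edgeFinset.1 he0)
    have hVne : Nonempty V := by
      induction e0 using Sym2.ind with
      | _ a b => exact ⟨a⟩
    have hn1 : 1 ≤ n := by
      have := Fintype.card_pos_iff.2 hVne
      omega
    by_cases hess : ∃ v : V, matchingNumber (G.induce ({v}ᶜ : Set V)) < matchingNumber G
    · -- delete an essential vertex
      obtain ⟨v, hv⟩ := hess
      have hcard : Fintype.card ↥({v}ᶜ : Set V) = n - 1 := by
        rw [Fintype.card_compl_set]
        simp [hn]
      have hIH := IH (n-1) (by omega) ↥({v}ᶜ : Set V) (G.induce ({v}ᶜ : Set V)) Δ hcard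
        (fun x => le_trans (degree_induce_le G _ x) (hdeg x))
      have hdel := edge_card_delete (G := G) v
      have hd := hdeg v
      set ν := matchingNumber G with hνdef
      set ν' := matchingNumber (G.induce ({v}ᶜ : Set V)) with hν'def
      calc G.edgeFinset.card
          = (G.induce ({v}ᶜ : Set V)).edgeFinset.card + G.degree v := hdel
        _ ≤ ν' * (Δ+1) + Δ := add_le_add hIH hd
        _ ≤ (ν - 1) * (Δ+1) + Δ := Nat.add_le_add_right (Nat.mul_le_mul_right _ (by omega)) Δ
        _ ≤ ν * (Δ+1) := by
            have h2 : (ν - 1) + 1 = ν := by omega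
            calc (ν-1)*(Δ+1) + Δ ≤ (ν-1)*(Δ+1) + (Δ+1) := by omega
              _ = ((ν-1)+1)*(Δ+1) := by ring
              _ = ν*(Δ+1) := by rw [h2]
    · push_neg at hess
      by_cases hpre : ∀ x y : V, G.Reachable x y
      · -- connected case : use Gallai's lemma
        have hconn : G.Connected := by
          rw [SimpleGraph.connected_iff]
          exact ⟨hpre, hVne⟩
        have hness : ∀ z : V, ∃ N : Finset (Sym2 V), IsMS G N ∧
            N.card = matchingNumber G ∧ ∀ e ∈ N, z ∉ e := by
          intro z
          have heq : matchingNumber (G.induce ({z}ᶜ : Set V)) = matchingNumber G :=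
            le_antisymm (nu_induce_le G _) (hess z)
          obtain ⟨M, hM, hMc⟩ := exists_max_matching (G.induce ({z}ᶜ : Set V))
          obtain ⟨h1, h2, h3⟩ := hM.lift
          refine ⟨_, h1, by rw [h2, hMc, heq], fun e he hz => ?_⟩
          have := h3 e he z hz
          simp at this
        have hgal := gallai hconn hness
        rw [hn] at hgal
        set ν := matchingNumber G with hνdef
        have h2e : 2 * G.edgeFinset.card ≤ n * Δ := by
          have hsum := SimpleGraph.sum_degrees_eq_twice_card_edges G
          have hb := Finset.sum_le_card_nsmul Finset.univ (fun v => G.degree v) Δ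
            (fun v _ => hdeg v)
          rw [Finset.card_univ, hn, smul_eq_mul] at hb
          omega
        by_cases hΔν : Δ ≤ 2 * ν
        · have h3 : n * Δ ≤ (2*ν+1) * Δ := Nat.mul_le_mul_right _ hgal
          have h4 : (2*ν+1) * Δ ≤ 2 * (ν * (Δ+1)) := by
            calc (2*ν+1) * Δ = 2*(ν*Δ) + Δ := by ring
              _ ≤ 2*(ν*Δ) + 2*ν := by omega
              _ = 2 * (ν * (Δ+1)) := by ring
          set X := ν * (Δ + 1) with hX
          omega
        · have hch := SimpleGraph.card_edgeFinset_le_card_choose_two (G := G)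
          rw [hn] at hch
          calc G.edgeFinset.card ≤ n.choose 2 := hch
            _ ≤ (2*ν+1).choose 2 := Nat.choose_le_choose 2 hgal
            _ = ν * (2*ν+1) := by
                rw [Nat.choose_two_right]
                rw [show (2*ν+1) * (2*ν+1-1) = (ν * (2*ν+1)) * 2 by
                  have h : 2*ν+1-1 = 2*ν := by omega
                  rw [h]; ring]
                exact Nat.mul_div_cancel _ (by norm_num)
            _ ≤ ν * (Δ+1) := Nat.mul_le_mul_left _ (by omega)
      · -- disconnected case : split along a reachability class
        push_neg at hpre
        obtain ⟨x, y, hxy⟩ := hpre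
        set s := {a : V | G.Reachable x a} with hs
        have hxs : x ∈ s := SimpleGraph.Reachable.refl x
        have hys : y ∈ sᶜ := hxy
        have hcl : ∀ a b : V, G.Adj a b → a ∈ s → b ∈ s := by
          intro a b hadj ha
          exact ha.trans hadj.reachable
        have hsplit := edge_card_split (G := G) s hcl
        have hνs := nu_split (G := G) s
        have hcs : Fintype.card ↥s + Fintype.card ↥(sᶜ : Set V) = n := by
          have := Fintype.card_compl_set s
          have h1 : Fintype.card ↥s ≤ Fintype.card V := Fintype.card_le_of_injective _
            Subtype.val_injective
          omega
        have hspos : 1 ≤ Fintype.card ↥s := Fintype.card_pos_iff.2 ⟨⟨x, hxs⟩⟩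
        have hcpos : 1 ≤ Fintype.card ↥(sᶜ : Set V) := Fintype.card_pos_iff.2 ⟨⟨y, hys⟩⟩
        have hIHA := IH (Fintype.card ↥s) (by omega) ↥s (G.induce s) Δ rfl
          (fun a => le_trans (degree_induce_le G _ a) (hdeg a))
        have hIHB := IH (Fintype.card ↥(sᶜ : Set V)) (by omega) ↥(sᶜ : Set V)
          (G.induce (sᶜ : Set V)) Δ rfl
          (fun a => le_trans (degree_induce_le G _ a) (hdeg a))
        calc G.edgeFinset.card
            = (G.induce s).edgeFinset.card + (G.induce (sᶜ : Set V)).edgeFinset.card := hsplit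
          _ ≤ matchingNumber (G.induce s) * (Δ+1)
              + matchingNumber (G.induce (sᶜ : Set V)) * (Δ+1) := add_le_add hIHA hIHB
          _ = (matchingNumber (G.induce s) + matchingNumber (G.induce (sᶜ : Set V))) * (Δ+1) := by
              rw [add_mul]
          _ ≤ matchingNumber G * (Δ+1) := Nat.mul_le_mul_right _ hνs

end Main

end CH

/-- Chvátal–Hanson bound: `e(G) ≤ ν (Δ + 1)` for graphs with matching number at most `ν`
and maximum degree at most `Δ`. -/
theorem chvatal_hanson_bound {V : Type*} [Fintype V] (G : SimpleGraph V) (ν Δ : ℕ)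
    (hν : 0 < ν) (hΔ : 0 < Δ) (hmatch : matchingNumber G ≤ ν) (hdeg : maxDeg G ≤ Δ) :
    edgeCount G ≤ ν * (Δ + 1) := by
  classical
  letI instE : DecidableEq V := Classical.decEq V
  letI instA : DecidableRel G.Adj := Classical.decRel _
  have hdeg' : ∀ v, G.degree v ≤ Δ := by
    intro v
    have h := G.degree_le_maxDegree v
    have h2 : G.maxDegree ≤ Δ := hdeg
    omega
  have hmain := CH.main_bound (Fintype.card V) V G Δ rfl hdeg'
  have hfin : G.edgeFinset.card ≤ ν * (Δ + 1) :=
    le_trans hmain (Nat.mul_le_mul_right _ hmatch)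
  exact hfin
end

section
/- Let G be a connected finite simple graph, let v_i and v_j be distinct vertices of G, and let S be a nonempty subset of N(v_j) \ (N(v_i) ∪ {v_i}). Let G' be the graph obtained from G by deleting the edges {v_j v : v ∈ S} and adding the edges {v_i v : v ∈ S}. If x is the Perron vector of G (a positive unit eigenvector of the adjacency matrix for the eigenvalue ρ(G)) and x_{v_i} ≥ x_{v_j}, then ρ(G') > ρ(G). -/
open Finset Matrix

section RotAux

set_option linter.unusedSectionVars false

open Finset Matrix

variable {V : Type*} [Fintype V] [DecidableEq V]

/-- auxiliary: matrix as a continuous linear map on Euclidean space. -/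
noncomputable def rotTC (A : Matrix V V ℝ) : EuclideanSpace ℝ V →L[ℝ] EuclideanSpace ℝ V :=
  LinearMap.toContinuousLinearMap (Matrix.toEuclideanLin A)

lemma rotTC_apply (A : Matrix V V ℝ) (v : V → ℝ) :
    rotTC A ((WithLp.equiv 2 (V → ℝ)).symm v) = (WithLp.equiv 2 (V → ℝ)).symm (A *ᵥ v) := rfl

lemma rot_inner (a b : V → ℝ) :
    (inner ℝ ((WithLp.equiv 2 (V → ℝ)).symm a) ((WithLp.equiv 2 (V → ℝ)).symm b) : ℝ)
      = ∑ v, a v * b v := by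
  simp [PiLp.inner_apply]
  exact Finset.sum_congr rfl fun v _ => mul_comm _ _

/-- the largest eigenvalue as sup of the Rayleigh quotient -/
noncomputable def rotLam (A : Matrix V V ℝ) : ℝ :=
  ⨆ x : { x : EuclideanSpace ℝ V // x ≠ 0 }, (rotTC A).rayleighQuotient x

lemma rot_bdd (A : Matrix V V ℝ) :
    BddAbove (Set.range fun x : { x : EuclideanSpace ℝ V // x ≠ 0 } =>
      (rotTC A).rayleighQuotient x) := by
  refine ⟨‖rotTC A‖, ?_⟩
  rintro t ⟨⟨z, hz⟩, rfl⟩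
  simp only
  have hzn : ‖z‖ ≠ 0 := norm_ne_zero_iff.mpr hz
  have hz' : (0:ℝ) < ‖z‖ ^ 2 := by positivity
  rw [show (rotTC A).rayleighQuotient z = (rotTC A).reApplyInnerSelf z / ‖z‖ ^ 2 from rfl,
    div_le_iff₀ hz']
  have h1 : (rotTC A).reApplyInnerSelf z ≤ ‖rotTC A z‖ * ‖z‖ :=
    re_inner_le_norm (𝕜 := ℝ) _ _
  calc (rotTC A).reApplyInnerSelf z ≤ ‖rotTC A z‖ * ‖z‖ := h1
    _ ≤ (‖rotTC A‖ * ‖z‖) * ‖z‖ := by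
        have := (rotTC A).le_opNorm z
        nlinarith [norm_nonneg z]
    _ = ‖rotTC A‖ * ‖z‖ ^ 2 := by ring

lemma rot_rayleigh_eig (A : Matrix V V ℝ) {t : ℝ} {z : EuclideanSpace ℝ V} (hz : z ≠ 0)
    (h : rotTC A z = t • z) : (rotTC A).rayleighQuotient z = t := by
  have hzn : ‖z‖ ≠ 0 := norm_ne_zero_iff.mpr hz
  have hz' : (0:ℝ) < ‖z‖ ^ 2 := by positivity
  rw [show (rotTC A).rayleighQuotient z = (rotTC A).reApplyInnerSelf z / ‖z‖ ^ 2 from rfl,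
    ContinuousLinearMap.reApplyInnerSelf, h]
  rw [real_inner_smul_left, real_inner_self_eq_norm_sq]
  field_simp
  exact RCLike.re_to_real

lemma rot_rayleigh_le (A : Matrix V V ℝ) (z : EuclideanSpace ℝ V) (hz : z ≠ 0) :
    (rotTC A).rayleighQuotient z ≤ rotLam A :=
  le_ciSup (rot_bdd A) ⟨z, hz⟩

lemma rot_eig_le (A : Matrix V V ℝ) {t : ℝ} {z : EuclideanSpace ℝ V} (hz : z ≠ 0)
    (h : rotTC A z = t • z) : t ≤ rotLam A := by
  rw [← rot_rayleigh_eig A hz h]; exact rot_rayleigh_le A z hz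

lemma rot_selfAdjoint {A : Matrix V V ℝ} (hA : A.IsHermitian) :
    IsSelfAdjoint (rotTC A) := by
  rw [ContinuousLinearMap.isSelfAdjoint_iff_isSymmetric]
  exact Matrix.isHermitian_iff_isSymmetric.mp hA

lemma rot_lam_mem [Nonempty V] {A : Matrix V V ℝ} (hA : A.IsHermitian) :
    ∃ z : EuclideanSpace ℝ V, z ≠ 0 ∧ rotTC A z = rotLam A • z := by
  have hsym : (Matrix.toEuclideanLin A).IsSymmetric := Matrix.isHermitian_iff_isSymmetric.mp hA
  obtain ⟨z, hz⟩ := hsym.hasEigenvalue_iSup_of_finiteDimensional.exists_hasEigenvector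
  exact ⟨z, hz.right, hz.apply_eq_smul⟩

lemma rot_max_eig [Nonempty V] {A : Matrix V V ℝ} (hA : A.IsHermitian)
    {z : EuclideanSpace ℝ V} (hz : z ≠ 0)
    (h : (rotTC A).rayleighQuotient z = rotLam A) : rotTC A z = rotLam A • z := by
  have hzn : ‖z‖ ≠ 0 := norm_ne_zero_iff.mpr hz
  have hmax : IsMaxOn (rotTC A).reApplyInnerSelf (Metric.sphere (0 : EuclideanSpace ℝ V) ‖z‖) z := by
    intro w hw
    have hwnorm : ‖w‖ = ‖z‖ := by simpa using hw
    have hw0 : w ≠ 0 := by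
      intro h0; apply hzn; rw [← hwnorm, h0, norm_zero]
    have h1 : (rotTC A).rayleighQuotient w ≤ rotLam A := rot_rayleigh_le A w hw0
    have hz2 : (0:ℝ) < ‖z‖ ^ 2 := by positivity
    have e1 : (rotTC A).reApplyInnerSelf w = (rotTC A).rayleighQuotient w * ‖z‖ ^ 2 := by
      rw [show (rotTC A).rayleighQuotient w = (rotTC A).reApplyInnerSelf w / ‖w‖ ^ 2 from rfl,
        hwnorm]
      field_simp
    have e2 : (rotTC A).reApplyInnerSelf z = rotLam A * ‖z‖ ^ 2 := by
      rw [← h, show (rotTC A).rayleighQuotient z = (rotTC A).reApplyInnerSelf z / ‖z‖ ^ 2 from rfl]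
      field_simp
    show (rotTC A).reApplyInnerSelf w ≤ (rotTC A).reApplyInnerSelf z
    rw [e1, e2]
    nlinarith
  have hev := (rot_selfAdjoint hA).hasEigenvector_of_isMaxOn hz hmax
  exact hev.apply_eq_smul

end RotAux

section RotAux2

set_option linter.unusedSectionVars false
set_option maxHeartbeats 1000000

open Finset Matrix

variable {V : Type*} [Fintype V] [DecidableEq V]

lemma rot_adjMat_apply (G : SimpleGraph V) [DecidableRel G.Adj] (u w : V) :
    adjMat G u w = if G.Adj u w then 1 else 0 := by
  by_cases h : G.Adj u w <;> simp [adjMat, h]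

lemma rot_adjMat_isHermitian (G : SimpleGraph V) : (adjMat G).IsHermitian := by
  classical
  show (adjMat G)ᴴ = adjMat G
  ext i j
  rw [Matrix.conjTranspose_apply, rot_adjMat_apply, rot_adjMat_apply, star_trivial,
    SimpleGraph.adj_comm]

lemma rot_specRad [Nonempty V] (G : SimpleGraph V) : specRad G = rotLam (adjMat G) := by
  have hA := rot_adjMat_isHermitian G
  obtain ⟨z, hz, hze⟩ := rot_lam_mem hA
  have hmem : rotLam (adjMat G) ∈ {t : ℝ | ∃ v : V → ℝ, v ≠ 0 ∧ adjMat G *ᵥ v = t • v} :=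
    ⟨z.ofLp, fun h => hz (by simpa using congrArg (WithLp.toLp 2) h), congrArg WithLp.ofLp hze⟩
  have hub : ∀ t ∈ {t : ℝ | ∃ v : V → ℝ, v ≠ 0 ∧ adjMat G *ᵥ v = t • v},
      t ≤ rotLam (adjMat G) := by
    rintro t ⟨v, hv, hveq⟩
    exact rot_eig_le (adjMat G) (z := (WithLp.equiv 2 (V → ℝ)).symm v)
      (fun h => hv (by simpa using congrArg WithLp.ofLp h)) (by rw [rotTC_apply, hveq]; rfl)
  exact le_antisymm (csSup_le ⟨_, hmem⟩ hub) (le_csSup ⟨_, hub⟩ hmem)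

end RotAux2

/-- Rotation lemma of Wu, Xiao and Hong: moving the edges from `vj` to `S` over to `vi`
strictly increases the spectral radius when `x vi ≥ x vj`. -/
theorem rotation_lemma {V : Type*} [Fintype V] (G G' : SimpleGraph V) (hconn : G.Connected)
    (vi vj : V) (hne : vi ≠ vj) (S : Set V) (hSne : S.Nonempty)
    (hS : S ⊆ G.neighborSet vj \ (G.neighborSet vi ∪ {vi}))
    (hG' : ∀ u w, G'.Adj u w ↔
      ((G.Adj u w ∧ ¬(u = vj ∧ w ∈ S) ∧ ¬(w = vj ∧ u ∈ S)) ∨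
        (u = vi ∧ w ∈ S) ∨ (w = vi ∧ u ∈ S)))
    (x : V → ℝ) (hxpos : ∀ v, 0 < x v) (hxunit : ∑ v, x v ^ 2 = 1)
    (heig : adjMat G *ᵥ x = specRad G • x) (hij : x vj ≤ x vi) :
    specRad G < specRad G' := by
  classical
  haveI : Nonempty V := ⟨vi⟩
  have hSadj : ∀ s ∈ S, G.Adj vj s := fun s hs => (hS hs).1
  have hSnadj : ∀ s ∈ S, ¬ G.Adj vi s := fun s hs h => (hS hs).2 (Or.inl h)
  have hSnvi : ∀ s ∈ S, s ≠ vi := fun s hs h => (hS hs).2 (Or.inr h)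
  have hSnvj : ∀ s ∈ S, s ≠ vj := fun s hs h => G.irrefl (h ▸ hSadj s hs)
  have hvinS : vi ∉ S := fun h => hSnvi vi h rfl
  have hvjnS : vj ∉ S := fun h => hSnvj vj h rfl
  set A := adjMat G with hAdef
  set A' := adjMat G' with hAdef'
  set Sf : Finset V := (Set.toFinite S).toFinset with hSfdef
  have hmemSf : ∀ s, s ∈ Sf ↔ s ∈ S := fun s => Set.Finite.mem_toFinset _
  obtain ⟨s₀, hs₀⟩ := hSne
  have hSfne : Sf.Nonempty := ⟨s₀, (hmemSf s₀).mpr hs₀⟩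
  set σ : ℝ := ∑ s ∈ Sf, x s with hσdef
  have hσpos : 0 < σ := Finset.sum_pos (fun s _ => hxpos s) hSfne
  have hApp : ∀ u w, A u w = if G.Adj u w then 1 else 0 := fun u w => rot_adjMat_apply G u w
  have hApp' : ∀ u w, A' u w = if G'.Adj u w then 1 else 0 := fun u w => rot_adjMat_apply G' u w
  have hmv : ∀ (M : Matrix V V ℝ) (u : V), (M *ᵥ x) u = ∑ w, M u w * x w := fun M u => rfl
  have hviSf : vi ∉ Sf := fun hcc => hvinS ((hmemSf vi).mp hcc)
  have hvjSf : vj ∉ Sf := fun hcc => hvjnS ((hmemSf vj).mp hcc)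
  -- the row lemma
  have hrow : ∀ u, (A' *ᵥ x) u = (A *ᵥ x) u +
      ((if u = vi then σ else 0) - (if u = vj then σ else 0) +
        (if u ∈ Sf then x vi - x vj else 0)) := by
    intro u
    by_cases h5 : u ∈ S
    · have hui : u ≠ vi := hSnvi u h5
      have huj : u ≠ vj := hSnvj u h5
      have huSf : u ∈ Sf := (hmemSf u).mpr h5
      have hentry : ∀ w, A' u w = A u w +
          ((if w = vi then (1:ℝ) else 0) - (if w = vj then (1:ℝ) else 0)) := by
        intro w
        rw [hApp', hApp]
        by_cases h3 : w = vi
        · rw [h3]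
          have ha : ¬ G.Adj u vi := fun h => hSnadj u h5 h.symm
          have ha' : G'.Adj u vi := (hG' u vi).mpr (Or.inr (Or.inr ⟨rfl, h5⟩))
          simp [ha, ha', hne]
        · by_cases h4 : w = vj
          · rw [h4]
            have ha : G.Adj u vj := (hSadj u h5).symm
            have ha' : ¬ G'.Adj u vj := by
              rw [hG']
              rintro (⟨_, _, hc⟩ | ⟨hc, _⟩ | ⟨hc, _⟩)
              · exact hc ⟨rfl, h5⟩
              · exact hui hc
              · exact hne hc.symm
            simp [ha, ha', h3, Ne.symm hne]
          · have hiff : G'.Adj u w ↔ G.Adj u w := by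
              rw [hG']
              constructor
              · rintro (⟨h, _, _⟩ | ⟨hc, _⟩ | ⟨hc, _⟩)
                · exact h
                · exact absurd hc hui
                · exact absurd hc h3
              · intro h
                exact Or.inl ⟨h, fun hc => huj hc.1, fun hc => h4 hc.1⟩
            rw [hiff]
            simp [h3, h4]
      have key : (A' *ᵥ x) u = (A *ᵥ x) u + (x vi - x vj) := by
        rw [hmv A', hmv A]
        calc ∑ w, A' u w * x w
            = ∑ w, (A u w * x w + ((if w = vi then (1:ℝ) else 0) * x w
                - (if w = vj then (1:ℝ) else 0) * x w)) :=
              Finset.sum_congr rfl fun w _ => by rw [hentry w]; ring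
          _ = (∑ w, A u w * x w) + (x vi - x vj) := by
              rw [Finset.sum_add_distrib, Finset.sum_sub_distrib]
              simp [ite_mul]
      rw [key]
      simp [hui, huj, huSf]
    · by_cases h1 : u = vi
      · rw [h1]
        have hentry : ∀ w, A' vi w = A vi w + (if w ∈ Sf then (1:ℝ) else 0) := by
          intro w
          rw [hApp', hApp]
          by_cases h6 : w ∈ S
          · have ha : ¬ G.Adj vi w := hSnadj w h6
            have ha' : G'.Adj vi w := (hG' vi w).mpr (Or.inr (Or.inl ⟨rfl, h6⟩))
            simp [ha, ha', (hmemSf w).mpr h6]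
          · have hwSf : w ∉ Sf := fun hc => h6 ((hmemSf w).mp hc)
            have hiff : G'.Adj vi w ↔ G.Adj vi w := by
              rw [hG']
              constructor
              · rintro (⟨h, _, _⟩ | ⟨_, hc⟩ | ⟨_, hc⟩)
                · exact h
                · exact absurd hc h6
                · exact absurd hc hvinS
              · intro h
                exact Or.inl ⟨h, fun hc => hne hc.1, fun hc => hvinS hc.2⟩
            rw [hiff]
            simp [hwSf]
        have key : (A' *ᵥ x) vi = (A *ᵥ x) vi + σ := by
          rw [hmv A', hmv A]
          calc ∑ w, A' vi w * x w
              = ∑ w, (A vi w * x w + (if w ∈ Sf then (1:ℝ) else 0) * x w) :=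
                Finset.sum_congr rfl fun w _ => by rw [hentry w]; ring
            _ = (∑ w, A vi w * x w) + σ := by
                rw [Finset.sum_add_distrib, hσdef]
                simp [ite_mul]
        rw [key]
        simp [hne, hviSf]
      · by_cases h2 : u = vj
        · rw [h2]
          have hentry : ∀ w, A' vj w = A vj w - (if w ∈ Sf then (1:ℝ) else 0) := by
            intro w
            rw [hApp', hApp]
            by_cases h6 : w ∈ S
            · have ha : G.Adj vj w := hSadj w h6
              have ha' : ¬ G'.Adj vj w := by
                rw [hG']
                rintro (⟨_, hc, _⟩ | ⟨hc, _⟩ | ⟨_, hc⟩)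
                · exact hc ⟨rfl, h6⟩
                · exact hne hc.symm
                · exact hvjnS hc
              simp [ha, ha', (hmemSf w).mpr h6]
            · have hwSf : w ∉ Sf := fun hc => h6 ((hmemSf w).mp hc)
              have hiff : G'.Adj vj w ↔ G.Adj vj w := by
                rw [hG']
                constructor
                · rintro (⟨h, _, _⟩ | ⟨hc, _⟩ | ⟨_, hc⟩)
                  · exact h
                  · exact absurd hc.symm hne
                  · exact absurd hc hvjnS
                · intro h
                  exact Or.inl ⟨h, fun hc => h6 hc.2, fun hc => hvjnS hc.2⟩
              rw [hiff]
              simp [hwSf]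
          have key : (A' *ᵥ x) vj = (A *ᵥ x) vj - σ := by
            rw [hmv A', hmv A]
            calc ∑ w, A' vj w * x w
                = ∑ w, (A vj w * x w - (if w ∈ Sf then (1:ℝ) else 0) * x w) :=
                  Finset.sum_congr rfl fun w _ => by rw [hentry w]; ring
              _ = (∑ w, A vj w * x w) - σ := by
                  rw [Finset.sum_sub_distrib, hσdef]
                  simp [ite_mul]
          rw [key]
          have : vj ≠ vi := hne.symm
          simp [this, hvjSf]
          ring
        · have huSf : u ∉ Sf := fun hc => h5 ((hmemSf u).mp hc)
          have hentry : ∀ w, A' u w = A u w := by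
            intro w
            rw [hApp', hApp]
            have hiff : G'.Adj u w ↔ G.Adj u w := by
              rw [hG']
              constructor
              · rintro (⟨h, _, _⟩ | ⟨hc, _⟩ | ⟨_, hc⟩)
                · exact h
                · exact absurd hc h1
                · exact absurd hc h5
              · intro h
                exact Or.inl ⟨h, fun hc => h2 hc.1, fun hc => h5 hc.2⟩
            rw [hiff]
          have key : (A' *ᵥ x) u = (A *ᵥ x) u := by
            rw [hmv A', hmv A]
            exact Finset.sum_congr rfl fun w _ => by rw [hentry w]
          rw [key]
          simp [h1, h2, huSf]
  -- Euclidean setup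
  set y : EuclideanSpace ℝ V := (WithLp.equiv 2 (V → ℝ)).symm x with hy
  have hy0 : y ≠ 0 := by
    intro h
    have hx0 : x vi = 0 := by
      have := congrArg (fun z => (WithLp.equiv 2 (V → ℝ)) z vi) h
      simpa [hy] using this
    exact (hxpos vi).ne' hx0
  have hynorm : ‖y‖ ^ 2 = 1 := by
    rw [← real_inner_self_eq_norm_sq y, hy, rot_inner]
    calc ∑ v, x v * x v = ∑ v, x v ^ 2 := by simp [sq]
    _ = 1 := hxunit
  set ρ := specRad G with hρdef
  have hTy : rotTC A y = ρ • y := by rw [hy, rotTC_apply, heig]; rfl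
  have hQA : (inner ℝ (rotTC A y) y : ℝ) = ρ := by
    rw [hTy, real_inner_smul_left, real_inner_self_eq_norm_sq, hynorm, mul_one]
  set q : ℝ := 2 * σ * (x vi - x vj) with hqdef
  have hqnn : 0 ≤ q := by
    have := sub_nonneg.mpr hij
    nlinarith
  have hQA' : (inner ℝ (rotTC A' y) y : ℝ) = ρ + q := by
    have e1 : (inner ℝ (rotTC A' y) y : ℝ) = ∑ u, (A' *ᵥ x) u * x u := by
      rw [hy, rotTC_apply]
      exact rot_inner _ _
    have e2 : (inner ℝ (rotTC A y) y : ℝ) = ∑ u, (A *ᵥ x) u * x u := by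
      rw [hy, rotTC_apply]
      exact rot_inner _ _
    rw [e2] at hQA
    rw [e1]
    have hfinal : σ * x vi - σ * x vj + (x vi - x vj) * σ = q := by rw [hqdef]; ring
    calc ∑ u, (A' *ᵥ x) u * x u
        = ∑ u, ((A *ᵥ x) u * x u + ((if u = vi then σ else 0) * x u
            - (if u = vj then σ else 0) * x u + (if u ∈ Sf then x vi - x vj else 0) * x u)) :=
          Finset.sum_congr rfl fun u _ => by rw [hrow u]; ring
      _ = (∑ u, (A *ᵥ x) u * x u)
            + (σ * x vi - σ * x vj + (x vi - x vj) * σ) := by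
          rw [Finset.sum_add_distrib]
          congr 1
          rw [Finset.sum_add_distrib, Finset.sum_sub_distrib]
          congr 1
          · congr 1
            · simp [ite_mul]
            · simp [ite_mul]
          · rw [show ((x vi - x vj) * σ) = ∑ w ∈ Sf, (x vi - x vj) * x w by
              rw [Finset.mul_sum]]
            simp [ite_mul]
      _ = ρ + q := by rw [hQA, hfinal]
  have hray' : (rotTC A').rayleighQuotient y = ρ + q := by
    rw [show (rotTC A').rayleighQuotient y = (rotTC A').reApplyInnerSelf y / ‖y‖ ^ 2 from rfl,
      hynorm, div_one]
    exact hQA'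
  have hAH' := rot_adjMat_isHermitian G'
  have hspec' : specRad G' = rotLam A' := rot_specRad G'
  have hge : ρ + q ≤ specRad G' := by
    rw [hspec', ← hray']
    exact rot_rayleigh_le A' y hy0
  by_contra hc
  push_neg at hc
  have heq : specRad G' = ρ := le_antisymm hc (le_trans (by linarith) hge)
  have h2 : rotLam A' = ρ := by rw [← hspec', heq]
  have hq0' : q = 0 := by
    have := rot_rayleigh_le A' y hy0
    rw [hray', h2] at this
    linarith
  have hrayeq : (rotTC A').rayleighQuotient y = rotLam A' := by
    rw [hray', h2, hq0', add_zero]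
  have hEig' : rotTC A' y = rotLam A' • y := rot_max_eig hAH' hy0 hrayeq
  rw [h2] at hEig'
  have hvi : (A' *ᵥ x) vi = ρ * x vi := congrFun (congrArg WithLp.ofLp hEig') vi
  have hvi0 : (A *ᵥ x) vi = ρ * x vi := congrFun heig vi
  have hfin := hrow vi
  rw [hvi, hvi0] at hfin
  simp [hne, hviSf] at hfin
  linarith
end

section
/- Let s, t, r be positive integers with r ≤ min{s,t}. Then the spectral radius ρ(K_{s,t}^{r,r}) is the largest real root of the polynomial equation x⁵ − (2r + st)x³ − 2r²x² + (2str − sr² − tr²)x = 0; in particular ρ(K_{s,t}^{r,r}) satisfies this equation, and every real root of this polynomial is at most ρ(K_{s,t}^{r,r}). -/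
open Finset Matrix

section SpecRadHelpers
open scoped Classical
noncomputable section

namespace SpecRadAux

variable {s t r : ℕ}

lemma Kstrr_mulVec (v : Option (Fin s ⊕ Fin t) → ℝ) (u : Option (Fin s ⊕ Fin t)) :
    (adjMat (Kstrr s t r) *ᵥ v) u
    = (∑ i : Fin s, if (Kstrr s t r).Adj u (some (Sum.inl i)) then v (some (Sum.inl i)) else 0)
      + (∑ j : Fin t, if (Kstrr s t r).Adj u (some (Sum.inr j)) then v (some (Sum.inr j)) else 0)
      + (if (Kstrr s t r).Adj u none then v none else 0) := by
  unfold adjMat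
  rw [Matrix.mulVec, dotProduct, Fintype.sum_option, Fintype.sum_sum_type]
  simp only [SimpleGraph.adjMatrix_apply, ite_mul, one_mul, zero_mul]
  ring_nf

lemma Kstrr_mulVec_none (v : Option (Fin s ⊕ Fin t) → ℝ) :
    (adjMat (Kstrr s t r) *ᵥ v) none
    = (∑ i : Fin s, if (i:ℕ) < r then v (some (Sum.inl i)) else 0)
      + (∑ j : Fin t, if (j:ℕ) < r then v (some (Sum.inr j)) else 0) := by
  rw [Kstrr_mulVec]
  simp [Kstrr]

lemma Kstrr_mulVec_inl (v : Option (Fin s ⊕ Fin t) → ℝ) (i : Fin s) :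
    (adjMat (Kstrr s t r) *ᵥ v) (some (Sum.inl i))
    = (∑ j : Fin t, v (some (Sum.inr j))) + (if (i:ℕ) < r then v none else 0) := by
  rw [Kstrr_mulVec]
  have h1 : ∀ i' : Fin s, ¬ (Kstrr s t r).Adj (some (Sum.inl i)) (some (Sum.inl i')) := by
    intro i'; simp [Kstrr]
  have h2 : ∀ j : Fin t, (Kstrr s t r).Adj (some (Sum.inl i)) (some (Sum.inr j)) := by
    intro j; simp [Kstrr]
  have h3 : (Kstrr s t r).Adj (some (Sum.inl i)) none ↔ (i:ℕ) < r := by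
    simp [Kstrr]
  simp [h1, h2, h3]

lemma Kstrr_mulVec_inr (v : Option (Fin s ⊕ Fin t) → ℝ) (j : Fin t) :
    (adjMat (Kstrr s t r) *ᵥ v) (some (Sum.inr j))
    = (∑ i : Fin s, v (some (Sum.inl i))) + (if (j:ℕ) < r then v none else 0) := by
  rw [Kstrr_mulVec]
  have h1 : ∀ j' : Fin t, ¬ (Kstrr s t r).Adj (some (Sum.inr j)) (some (Sum.inr j')) := by
    intro j'; simp [Kstrr]
  have h2 : ∀ i : Fin s, (Kstrr s t r).Adj (some (Sum.inr j)) (some (Sum.inl i)) := by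
    intro i; simp [Kstrr]
  have h3 : (Kstrr s t r).Adj (some (Sum.inr j)) none ↔ (j:ℕ) < r := by
    simp [Kstrr]
  simp [h1, h2, h3]

lemma card_filter_lt {m k : ℕ} (hk : k ≤ m) :
    (Finset.univ.filter fun i : Fin m => (i:ℕ) < k).card = k := by
  have : (Finset.univ.filter fun i : Fin m => (i:ℕ) < k)
      = Finset.map (Fin.castLEEmb hk) Finset.univ := by
    ext i
    simp only [Finset.mem_filter, Finset.mem_univ, true_and, Finset.mem_map]
    constructor
    · intro hi; exact ⟨⟨i, hi⟩, rfl⟩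
    · rintro ⟨j, rfl⟩; exact j.2
  rw [this, Finset.card_map, Finset.card_univ, Fintype.card_fin]

lemma sum_ite_lt {m k : ℕ} (hk : k ≤ m) (f : Fin m → ℝ) (c : ℝ)
    (hf : ∀ i : Fin m, (i:ℕ) < k → f i = c) :
    ∑ i : Fin m, (if (i:ℕ) < k then f i else 0) = (k:ℝ) * c := by
  rw [Finset.sum_ite, Finset.sum_const_zero, add_zero,
    Finset.sum_congr rfl (fun i hi => hf i (Finset.mem_filter.mp hi).2),
    Finset.sum_const, card_filter_lt hk, nsmul_eq_mul]

lemma key_root (s t r : ℕ) (hrs : r ≤ s) (hrt : r ≤ t) {x : ℝ}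
    {v : Option (Fin s ⊕ Fin t) → ℝ} (hv : v ≠ 0)
    (h : adjMat (Kstrr s t r) *ᵥ v = x • v) :
    x^4 - (2*(r:ℝ) + s*t)*x^2 - 2*(r:ℝ)^2*x + (2*(s:ℝ)*t*r - s*(r:ℝ)^2 - t*(r:ℝ)^2) = 0
      ∨ x = 0 := by
  by_cases hx : x = 0
  · right; exact hx
  left
  set a := v none with ha
  set X := ∑ i : Fin s, v (some (Sum.inl i)) with hX
  set Y := ∑ j : Fin t, v (some (Sum.inr j)) with hY
  have hinl : ∀ i : Fin s, x * v (some (Sum.inl i)) = Y + (if (i:ℕ) < r then a else 0) := by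
    intro i
    have h1 := congrFun h (some (Sum.inl i))
    rw [Kstrr_mulVec_inl, Pi.smul_apply, smul_eq_mul] at h1
    linarith [h1]
  have hinr : ∀ j : Fin t, x * v (some (Sum.inr j)) = X + (if (j:ℕ) < r then a else 0) := by
    intro j
    have h1 := congrFun h (some (Sum.inr j))
    rw [Kstrr_mulVec_inr, Pi.smul_apply, smul_eq_mul] at h1
    linarith [h1]
  have hnone : x * a = (∑ i : Fin s, if (i:ℕ) < r then v (some (Sum.inl i)) else 0)
      + (∑ j : Fin t, if (j:ℕ) < r then v (some (Sum.inr j)) else 0) := by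
    have h1 := congrFun h none
    rw [Kstrr_mulVec_none, Pi.smul_apply, smul_eq_mul] at h1
    linarith [h1]
  have e1 : x * X = (r:ℝ) * a + s * Y := by
    have h2 : ∑ i : Fin s, x * v (some (Sum.inl i))
        = ∑ i : Fin s, (Y + if (i:ℕ) < r then a else 0) :=
      Finset.sum_congr rfl fun i _ => hinl i
    rw [← Finset.mul_sum, Finset.sum_add_distrib, Finset.sum_const,
      sum_ite_lt hrs _ a (fun _ _ => rfl), Finset.card_univ, Fintype.card_fin,
      nsmul_eq_mul] at h2
    rw [← hX] at h2
    linarith [h2]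
  have e2 : x * Y = (r:ℝ) * a + t * X := by
    have h2 : ∑ j : Fin t, x * v (some (Sum.inr j))
        = ∑ j : Fin t, (X + if (j:ℕ) < r then a else 0) :=
      Finset.sum_congr rfl fun j _ => hinr j
    rw [← Finset.mul_sum, Finset.sum_add_distrib, Finset.sum_const,
      sum_ite_lt hrt _ a (fun _ _ => rfl), Finset.card_univ, Fintype.card_fin,
      nsmul_eq_mul] at h2
    rw [← hY] at h2
    linarith [h2]
  have e3 : x * (x * a) = (r:ℝ) * (Y + a) + (r:ℝ) * (X + a) := by
    rw [hnone, mul_add, Finset.mul_sum, Finset.mul_sum]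
    have hl : ∀ i : Fin s, x * (if (i:ℕ) < r then v (some (Sum.inl i)) else 0)
        = (if (i:ℕ) < r then x * v (some (Sum.inl i)) else 0) := by
      intro i; split <;> ring
    have hr' : ∀ j : Fin t, x * (if (j:ℕ) < r then v (some (Sum.inr j)) else 0)
        = (if (j:ℕ) < r then x * v (some (Sum.inr j)) else 0) := by
      intro j; split <;> ring
    rw [Finset.sum_congr rfl fun i _ => hl i, Finset.sum_congr rfl fun j _ => hr' j,
      sum_ite_lt hrs _ (Y + a) (fun i hi => by rw [hinl i, if_pos hi]),
      sum_ite_lt hrt _ (X + a) (fun j hj => by rw [hinr j, if_pos hj])]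
  have hnontriv : ¬(X = 0 ∧ Y = 0 ∧ a = 0) := by
    rintro ⟨h1, h2, h3⟩
    apply hv
    funext u
    match u with
    | none => exact h3
    | some (Sum.inl i) =>
      have := hinl i
      rw [h2, h3] at this
      simp only [ite_self, zero_add, Pi.zero_apply] at this ⊢
      exact (mul_eq_zero.mp this).resolve_left hx
    | some (Sum.inr j) =>
      have := hinr j
      rw [h1, h3] at this
      simp only [ite_self, zero_add, Pi.zero_apply] at this ⊢
      exact (mul_eq_zero.mp this).resolve_left hx
  have hdet : (!![x, -(s:ℝ), -(r:ℝ); -(t:ℝ), x, -(r:ℝ);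
      -(r:ℝ), -(r:ℝ), x^2 - 2*r] : Matrix (Fin 3) (Fin 3) ℝ).det = 0 := by
    rw [← Matrix.exists_mulVec_eq_zero_iff]
    refine ⟨![X, Y, a], ?_, ?_⟩
    · intro h0
      exact hnontriv ⟨congrFun h0 0, congrFun h0 1, congrFun h0 2⟩
    · funext k
      fin_cases k <;>
        simp [Matrix.mulVec, dotProduct, Fin.sum_univ_three] <;> nlinarith [e1, e2, e3]
  rw [Matrix.det_fin_three] at hdet
  norm_num [Matrix.cons_val_zero, Matrix.cons_val_one, Matrix.head_cons, Matrix.cons_val_two, Matrix.tail_cons] at hdet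
  linear_combination hdet

lemma key_mem (s t r : ℕ) (hr : 0 < r) (hrs : r ≤ s) (hrt : r ≤ t) {y : ℝ} (hy : y ≠ 0)
    (hq : y^4 - (2*(r:ℝ) + s*t)*y^2 - 2*(r:ℝ)^2*y + (2*(s:ℝ)*t*r - s*(r:ℝ)^2 - t*(r:ℝ)^2) = 0) :
    ∃ v : Option (Fin s ⊕ Fin t) → ℝ, v ≠ 0 ∧ adjMat (Kstrr s t r) *ᵥ v = y • v := by
  have hdet : (!![y, -(s:ℝ), -(r:ℝ); -(t:ℝ), y, -(r:ℝ);
      -(r:ℝ), -(r:ℝ), y^2 - 2*r] : Matrix (Fin 3) (Fin 3) ℝ).det = 0 := by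
    rw [Matrix.det_fin_three]
    norm_num [Matrix.cons_val_zero, Matrix.cons_val_one, Matrix.head_cons, Matrix.cons_val_two, Matrix.tail_cons]
    linear_combination hq
  obtain ⟨u, hu0, hu⟩ := (Matrix.exists_mulVec_eq_zero_iff).mpr hdet
  set X := u 0 with hXd
  set Y := u 1 with hYd
  set a := u 2 with had
  have r0 : y * X + (-(s:ℝ)) * Y + (-(r:ℝ)) * a = 0 := by
    have h1 := congrFun hu 0
    simpa [Matrix.mulVec, dotProduct, Fin.sum_univ_three] using h1
  have r1 : (-(t:ℝ)) * X + y * Y + (-(r:ℝ)) * a = 0 := by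
    have h1 := congrFun hu 1
    simpa [Matrix.mulVec, dotProduct, Fin.sum_univ_three] using h1
  have r2 : (-(r:ℝ)) * X + (-(r:ℝ)) * Y + (y^2 - 2*r) * a = 0 := by
    have h1 := congrFun hu 2
    simpa [Matrix.mulVec, dotProduct, Fin.sum_univ_three] using h1
  set v : Option (Fin s ⊕ Fin t) → ℝ := fun w =>
    match w with
    | none => a
    | some (Sum.inl i) => ((if (i:ℕ) < r then a else 0) + Y) / y
    | some (Sum.inr j) => ((if (j:ℕ) < r then a else 0) + X) / y
    with hvd
  have hvnone : v none = a := rfl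
  have hvinl : ∀ i : Fin s, v (some (Sum.inl i)) = ((if (i:ℕ) < r then a else 0) + Y) / y :=
    fun _ => rfl
  have hvinr : ∀ j : Fin t, v (some (Sum.inr j)) = ((if (j:ℕ) < r then a else 0) + X) / y :=
    fun _ => rfl
  have hSX : ∑ i : Fin s, v (some (Sum.inl i)) = X := by
    have hsplit : ∀ i : Fin s, v (some (Sum.inl i))
        = (if (i:ℕ) < r then a/y else 0) + Y/y := by
      intro i
      rw [hvinl i]
      by_cases hi : (i:ℕ) < r <;> simp [hi] <;> ring
    rw [Finset.sum_congr rfl fun i _ => hsplit i, Finset.sum_add_distrib,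
      sum_ite_lt hrs _ (a/y) (fun _ _ => rfl), Finset.sum_const, Finset.card_univ,
      Fintype.card_fin, nsmul_eq_mul]
    field_simp
    linarith [r0]
  have hTY : ∑ j : Fin t, v (some (Sum.inr j)) = Y := by
    have hsplit : ∀ j : Fin t, v (some (Sum.inr j))
        = (if (j:ℕ) < r then a/y else 0) + X/y := by
      intro j
      rw [hvinr j]
      by_cases hj : (j:ℕ) < r <;> simp [hj] <;> ring
    rw [Finset.sum_congr rfl fun j _ => hsplit j, Finset.sum_add_distrib,
      sum_ite_lt hrt _ (a/y) (fun _ _ => rfl), Finset.sum_const, Finset.card_univ,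
      Fintype.card_fin, nsmul_eq_mul]
    field_simp
    linarith [r1]
  refine ⟨v, ?_, ?_⟩
  · intro h0
    have ha0 : a = 0 := congrFun h0 none
    have hY0 : Y = 0 := by
      have h1 := congrFun h0 (some (Sum.inl ⟨0, lt_of_lt_of_le hr hrs⟩))
      rw [hvinl] at h1
      simp only [hr, if_pos, ha0, zero_add, Pi.zero_apply] at h1
      exact (div_eq_zero_iff.mp h1).resolve_right hy
    have hX0 : X = 0 := by
      have h1 := congrFun h0 (some (Sum.inr ⟨0, lt_of_lt_of_le hr hrt⟩))
      rw [hvinr] at h1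
      simp only [hr, if_pos, ha0, zero_add, Pi.zero_apply] at h1
      exact (div_eq_zero_iff.mp h1).resolve_right hy
    apply hu0
    funext k
    fin_cases k
    · exact hX0
    · exact hY0
    · exact ha0
  · funext w
    match w with
    | none =>
      rw [Pi.smul_apply, smul_eq_mul, Kstrr_mulVec_none, hvnone]
      rw [sum_ite_lt hrs _ ((a + Y)/y) (fun i hi => by rw [hvinl i, if_pos hi]),
        sum_ite_lt hrt _ ((a + X)/y) (fun j hj => by rw [hvinr j, if_pos hj])]
      field_simp
      nlinarith [r2]
    | some (Sum.inl i) =>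
      rw [Pi.smul_apply, smul_eq_mul, Kstrr_mulVec_inl, hTY, hvnone, hvinl i]
      by_cases hi : (i:ℕ) < r <;> simp [hi] <;> field_simp <;> ring
    | some (Sum.inr j) =>
      rw [Pi.smul_apply, smul_eq_mul, Kstrr_mulVec_inr, hSX, hvnone, hvinr j]
      by_cases hj : (j:ℕ) < r <;> simp [hj] <;> field_simp <;> ring

variable {V : Type*} [Fintype V] [DecidableEq V] {A : Matrix V V ℝ}

lemma eig_mem (hA : A.IsHermitian) {x : ℝ} {v : V → ℝ}
    (hv : v ≠ 0) (h : A *ᵥ v = x • v) : ∃ i, hA.eigenvalues i = x := by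
  set U : Matrix V V ℝ := (hA.eigenvectorUnitary : Matrix V V ℝ) with hU
  have hUU : U * star U = 1 := (Matrix.mem_unitaryGroup_iff).mp hA.eigenvectorUnitary.2
  have hUU' : star U * U = 1 := (Matrix.mem_unitaryGroup_iff').mp hA.eigenvectorUnitary.2
  set w : V → ℝ := star U *ᵥ v with hw
  have hvw : U *ᵥ w = v := by
    rw [hw, Matrix.mulVec_mulVec, hUU, Matrix.one_mulVec]
  have hwne : w ≠ 0 := by
    intro h0
    rw [h0, Matrix.mulVec_zero] at hvw
    exact hv hvw.symm
  have hdiag : Matrix.diagonal (RCLike.ofReal ∘ hA.eigenvalues) *ᵥ w = x • w := by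
    rw [← hA.conjStarAlgAut_star_eigenvectorUnitary, Unitary.conjStarAlgAut_apply, Unitary.coe_star,
      star_star, ← hU]
    rw [← Matrix.mulVec_mulVec, ← Matrix.mulVec_mulVec, hvw, h, Matrix.mulVec_smul]
  obtain ⟨i, hi⟩ := Function.ne_iff.mp hwne
  refine ⟨i, ?_⟩
  have := congrFun hdiag i
  rw [Matrix.mulVec_diagonal] at this
  simp only [Pi.smul_apply, smul_eq_mul, Function.comp_apply, RCLike.ofReal_real_eq_id,
    id_eq] at this
  exact mul_right_cancel₀ hi this

lemma sum_eig (hA : A.IsHermitian) : ∑ i, hA.eigenvalues i = A.trace := by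
  set U : Matrix V V ℝ := (hA.eigenvectorUnitary : Matrix V V ℝ) with hU
  have hUU' : star U * U = 1 := (Matrix.mem_unitaryGroup_iff').mp hA.eigenvectorUnitary.2
  conv_rhs => rw [hA.spectral_theorem]
  rw [Unitary.conjStarAlgAut_apply, ← hU, Matrix.trace_mul_comm, ← Matrix.mul_assoc, hUU', Matrix.one_mul, Matrix.trace_diagonal]
  simp

lemma SpecRadAux.eig_mem' (hA : A.IsHermitian) (i : V) :
    ∃ v : V → ℝ, v ≠ 0 ∧ A *ᵥ v = hA.eigenvalues i • v := by
  refine ⟨⇑(hA.eigenvectorBasis i), ?_, hA.mulVec_eigenvectorBasis i⟩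
  have := hA.eigenvectorBasis.orthonormal.ne_zero i
  intro h0
  apply this
  ext j
  exact congrFun h0 j

end SpecRadAux

end
end SpecRadHelpers

/-- The spectral radius of `K_{s,t}^{r,r}` is the largest real root of
`x⁵ − (2r + st)x³ − 2r²x² + (2str − sr² − tr²)x = 0`. -/
theorem specRad_Kstrr_root (s t r : ℕ) (hs : 0 < s) (ht : 0 < t) (hr : 0 < r)
    (hrs : r ≤ s) (hrt : r ≤ t) :
    (specRad (Kstrr s t r)) ^ 5
        - (2 * (r : ℝ) + (s : ℝ) * (t : ℝ)) * (specRad (Kstrr s t r)) ^ 3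
        - 2 * (r : ℝ) ^ 2 * (specRad (Kstrr s t r)) ^ 2
        + (2 * (s : ℝ) * (t : ℝ) * (r : ℝ) - (s : ℝ) * (r : ℝ) ^ 2
            - (t : ℝ) * (r : ℝ) ^ 2) * specRad (Kstrr s t r) = 0 ∧
      ∀ y : ℝ,
        y ^ 5 - (2 * (r : ℝ) + (s : ℝ) * (t : ℝ)) * y ^ 3 - 2 * (r : ℝ) ^ 2 * y ^ 2
            + (2 * (s : ℝ) * (t : ℝ) * (r : ℝ) - (s : ℝ) * (r : ℝ) ^ 2
                - (t : ℝ) * (r : ℝ) ^ 2) * y = 0 →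
          y ≤ specRad (Kstrr s t r) := by
    classical
  set V := Option (Fin s ⊕ Fin t)
  set A : Matrix V V ℝ := adjMat (Kstrr s t r) with hAdef
  have hSymm : A.IsHermitian := by
    show Aᴴ = A
    ext i j
    simp only [conjTranspose_apply, star_trivial, hAdef, adjMat]
    simp [SimpleGraph.adjMatrix_apply, SimpleGraph.adj_comm]
  set E := {x : ℝ | ∃ v : V → ℝ, v ≠ 0 ∧ A *ᵥ v = x • v} with hEdef
  have hspec : specRad (Kstrr s t r) = sSup E := rfl
  have hErange : E = Set.range hSymm.eigenvalues := by
    ext x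
    constructor
    · rintro ⟨v, hv, hAv⟩
      obtain ⟨i, hi⟩ := SpecRadAux.eig_mem hSymm hv hAv
      exact ⟨i, hi⟩
    · rintro ⟨i, rfl⟩
      exact SpecRadAux.SpecRadAux.eig_mem' hSymm i
  have hfin : E.Finite := hErange ▸ Set.finite_range _
  have hne : E.Nonempty := by
    rw [hErange]; exact Set.range_nonempty _
  have hbdd : BddAbove E := hfin.bddAbove
  have hmem : sSup E ∈ E := hne.csSup_mem hfin
  set ρ := sSup E with hρ
  have hub : ∀ x ∈ E, x ≤ ρ := fun x hx => le_csSup hbdd hx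
  have htr : A.trace = 0 := by
    simp only [hAdef, adjMat]
    exact SimpleGraph.trace_adjMatrix _ _
  have hρ0 : 0 ≤ ρ := by
    by_contra hneg
    push_neg at hneg
    have hall : ∀ i : V, hSymm.eigenvalues i < 0 := fun i =>
      lt_of_le_of_lt (hub _ (hErange ▸ Set.mem_range_self i)) hneg
    have hlt : (∑ i : V, hSymm.eigenvalues i) < ∑ _i : V, (0:ℝ) :=
      Finset.sum_lt_sum_of_nonempty Finset.univ_nonempty (fun i _ => hall i)
    rw [Finset.sum_const_zero, SpecRadAux.sum_eig hSymm, htr] at hlt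
    exact lt_irrefl 0 hlt
  rw [hspec]
  constructor
  · obtain ⟨v, hv, hAv⟩ := hmem
    rcases SpecRadAux.key_root s t r hrs hrt hv hAv with hq | h0
    · linear_combination ρ * hq
    · rw [h0]; ring
  · intro y hy5
    have hfact : y * (y^4 - (2*(r:ℝ) + s*t)*y^2 - 2*(r:ℝ)^2*y
        + (2*(s:ℝ)*t*r - s*(r:ℝ)^2 - t*(r:ℝ)^2)) = 0 := by
      linear_combination hy5
    rcases mul_eq_zero.mp hfact with h0 | hq
    · rw [h0]; exact hρ0
    · by_cases h0 : y = 0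
      · rw [h0]; exact hρ0
      · exact hub y (SpecRadAux.key_mem s t r hr hrs hrt h0 hq)
end

section
/- Let r ≥ 1 and n ≥ 8(r²+r+4) be integers. Then ρ(K_{⌊(n−1)/2⌋,⌈(n−1)/2⌉}^{r,r}) > (n−1)/2 − 1/(4(n−1)) > 4(r²+r+2), and moreover ρ(K_{⌊(n−1)/2⌋,⌈(n−1)/2⌉}^{r,r})² > ⌊(n−1)²/4⌋. -/
open Finset Matrix

section AuxLemmas

open Finset Matrix

lemma aux_card_filter_lt (s r : ℕ) (h : r ≤ s) :
    ((univ : Finset (Fin s)).filter fun a : Fin s => a.val < r).card = r := by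
  have : ((univ : Finset (Fin s)).filter fun a : Fin s => a.val < r) =
      (univ : Finset (Fin r)).map ⟨Fin.castLE h, Fin.castLE_injective h⟩ := by
    ext a
    simp only [mem_filter, mem_univ, true_and, mem_map, Function.Embedding.coeFn_mk]
    constructor
    · intro ha; exact ⟨⟨a, ha⟩, rfl⟩
    · rintro ⟨b, rfl⟩; exact b.isLt
  rw [this, card_map, card_univ, Fintype.card_fin]

lemma aux_top_eigen {V : Type*} [Fintype V] [DecidableEq V] [Nonempty V]
    {A : Matrix V V ℝ} (hA : A.IsHermitian) :
    ∃ μ : ℝ, (∃ v : V → ℝ, v ≠ 0 ∧ A *ᵥ v = μ • v) ∧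
      ∀ x : V → ℝ, x ⬝ᵥ (A *ᵥ x) ≤ μ * (x ⬝ᵥ x) := by
  obtain ⟨i₀, -, hmax⟩ :=
    Finset.exists_max_image univ hA.eigenvalues ⟨Classical.arbitrary V, mem_univ _⟩
  set b := hA.eigenvectorBasis with hb
  have hsym : Aᵀ = A := by
    have := hA.eq
    rw [Matrix.conjTranspose] at this
    exact (Matrix.conjTranspose_eq_transpose_of_trivial A).symm.trans hA.eq
  refine ⟨hA.eigenvalues i₀, ⟨b i₀, fun h => b.orthonormal.ne_zero i₀ (by simpa using congrArg (WithLp.toLp 2) h), hA.mulVec_eigenvectorBasis i₀⟩, ?_⟩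
  intro x
  have hdot : ∀ y z : EuclideanSpace ℝ V, (inner ℝ y z : ℝ) = (y : V → ℝ) ⬝ᵥ (z : V → ℝ) := by
    intro y z
    simp [PiLp.inner_apply, dotProduct, RCLike.inner_apply, mul_comm]
  let x' : EuclideanSpace ℝ V := WithLp.toLp 2 x
  let y' : EuclideanSpace ℝ V := WithLp.toLp 2 (A *ᵥ x)
  have key := b.sum_inner_mul_inner x' y'
  have hterm : ∀ i, (inner ℝ (b i) y' : ℝ) = hA.eigenvalues i * (inner ℝ (b i) x' : ℝ) := by
    intro i
    have hv : A *ᵥ (b i : V → ℝ) = hA.eigenvalues i • (b i : V → ℝ) :=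
      hA.mulVec_eigenvectorBasis i
    have h2 : (b i : V → ℝ) ⬝ᵥ (A *ᵥ x) = (A *ᵥ (b i : V → ℝ)) ⬝ᵥ x := by
      rw [Matrix.dotProduct_mulVec, ← Matrix.mulVec_transpose, hsym]
    rw [hdot, hdot, h2, hv, smul_dotProduct]
    rfl
  have hxx := b.sum_inner_mul_inner x' x'
  have h1 : x ⬝ᵥ (A *ᵥ x)
      = ∑ i, hA.eigenvalues i * ((inner ℝ x' (b i) : ℝ) * (inner ℝ (b i) x' : ℝ)) := by
    rw [← hdot x' y', ← key]
    apply Finset.sum_congr rfl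
    intro i _
    rw [hterm i]; ring
  have h2 : x ⬝ᵥ x = ∑ i, (inner ℝ x' (b i) : ℝ) * (inner ℝ (b i) x' : ℝ) := by
    rw [← hdot x' x', ← hxx]
  rw [h1, h2, Finset.mul_sum]
  apply Finset.sum_le_sum
  intro i _
  have hnn : (0:ℝ) ≤ (inner ℝ x' (b i) : ℝ) * (inner ℝ (b i) x' : ℝ) := by
    rw [real_inner_comm x' (b i)]; exact mul_self_nonneg _
  exact mul_le_mul_of_nonneg_right (hmax i (mem_univ i)) hnn

lemma aux_adjMat_isHermitian {V : Type*} (G : SimpleGraph V) : (adjMat G).IsHermitian := by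
  ext i j
  simp only [Matrix.conjTranspose_apply, adjMat, SimpleGraph.adjMatrix_apply, star_trivial]
  by_cases h : G.Adj i j
  · simp [h, h.symm]
  · simp only [h, if_false, ite_eq_right_iff]
    exact fun h' => absurd h'.symm h

lemma aux_specRad_bddAbove {V : Type*} [Fintype V] (G : SimpleGraph V) :
    BddAbove {t : ℝ | ∃ v : V → ℝ, v ≠ 0 ∧ adjMat G *ᵥ v = t • v} := by
  classical
  refine ⟨Fintype.card V, ?_⟩
  rintro t ⟨v, hv, hev⟩
  obtain ⟨j, hj⟩ : ∃ j, v j ≠ 0 := Function.ne_iff.mp hv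
  obtain ⟨i₀, -, hmax⟩ := Finset.exists_max_image univ (fun i => |v i|) ⟨j, mem_univ j⟩
  have hpos : 0 < |v i₀| := lt_of_lt_of_le (abs_pos.mpr hj) (hmax j (mem_univ j))
  have hentry : ∀ i k, |adjMat G i k| ≤ 1 := by
    intro i k
    simp only [adjMat, SimpleGraph.adjMatrix_apply]
    split <;> norm_num
  have h1 : |t| * |v i₀| ≤ (Fintype.card V : ℝ) * |v i₀| := by
    have h2 : t * v i₀ = ∑ k, adjMat G i₀ k * v k := by
      have := congrFun hev i₀
      simp only [Matrix.mulVec, dotProduct, Pi.smul_apply, smul_eq_mul] at this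
      rw [← this]
    calc |t| * |v i₀| = |t * v i₀| := (abs_mul t (v i₀)).symm
      _ = |∑ k, adjMat G i₀ k * v k| := by rw [h2]
      _ ≤ ∑ k, |adjMat G i₀ k * v k| := Finset.abs_sum_le_sum_abs _ _
      _ ≤ ∑ _k : V, |v i₀| := by
          apply Finset.sum_le_sum
          intro k _
          rw [abs_mul]
          calc |adjMat G i₀ k| * |v k| ≤ 1 * |v i₀| :=
            mul_le_mul (hentry i₀ k) (hmax k (mem_univ k)) (abs_nonneg _) zero_le_one
          _ = |v i₀| := one_mul _
      _ = (Fintype.card V : ℝ) * |v i₀| := by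
          rw [Finset.sum_const, card_univ, nsmul_eq_mul]
  exact le_trans (le_abs_self t) (le_of_mul_le_mul_right h1 hpos)

/-- The test vector constant on each part. -/
def tv (s t : ℕ) (α β γ : ℝ) : Option (Fin s ⊕ Fin t) → ℝ :=
  fun u => u.elim γ (Sum.elim (fun _ => α) (fun _ => β))

lemma aux_quad_form (s t r : ℕ) (α β γ : ℝ) (hrs : r ≤ s) (hrt : r ≤ t) :
    tv s t α β γ ⬝ᵥ (adjMat (Kstrr s t r) *ᵥ tv s t α β γ)
      = 2*s*t*(α*β) + 2*r*(γ*(α+β)) := by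
  have e1 : adjMat (Kstrr s t r) none none = 0 := by
    simp only [adjMat, SimpleGraph.adjMatrix_apply]; simp [Kstrr, SimpleGraph.fromRel_adj]
  have e2 : ∀ a : Fin s,
      adjMat (Kstrr s t r) none (some (Sum.inl a)) = if a.val < r then 1 else 0 := by
    intro a; simp only [adjMat, SimpleGraph.adjMatrix_apply]; simp [Kstrr, SimpleGraph.fromRel_adj]
  have e3 : ∀ b : Fin t,
      adjMat (Kstrr s t r) none (some (Sum.inr b)) = if b.val < r then 1 else 0 := by
    intro b; simp only [adjMat, SimpleGraph.adjMatrix_apply]; simp [Kstrr, SimpleGraph.fromRel_adj]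
  have e4 : ∀ a : Fin s,
      adjMat (Kstrr s t r) (some (Sum.inl a)) none = if a.val < r then 1 else 0 := by
    intro a; simp only [adjMat, SimpleGraph.adjMatrix_apply]; simp [Kstrr, SimpleGraph.fromRel_adj]
  have e5 : ∀ b : Fin t,
      adjMat (Kstrr s t r) (some (Sum.inr b)) none = if b.val < r then 1 else 0 := by
    intro b; simp only [adjMat, SimpleGraph.adjMatrix_apply]; simp [Kstrr, SimpleGraph.fromRel_adj]
  have e6 : ∀ (a : Fin s) (b : Fin t),
      adjMat (Kstrr s t r) (some (Sum.inl a)) (some (Sum.inr b)) = 1 := by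
    intro a b; simp only [adjMat, SimpleGraph.adjMatrix_apply]; simp [Kstrr, SimpleGraph.fromRel_adj]
  have e7 : ∀ (a : Fin s) (b : Fin t),
      adjMat (Kstrr s t r) (some (Sum.inr b)) (some (Sum.inl a)) = 1 := by
    intro a b; simp only [adjMat, SimpleGraph.adjMatrix_apply]; simp [Kstrr, SimpleGraph.fromRel_adj]
  have e8 : ∀ a a' : Fin s,
      adjMat (Kstrr s t r) (some (Sum.inl a)) (some (Sum.inl a')) = 0 := by
    intro a a'; simp only [adjMat, SimpleGraph.adjMatrix_apply]; simp [Kstrr, SimpleGraph.fromRel_adj]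
  have e9 : ∀ b b' : Fin t,
      adjMat (Kstrr s t r) (some (Sum.inr b)) (some (Sum.inr b')) = 0 := by
    intro b b'; simp only [adjMat, SimpleGraph.adjMatrix_apply]; simp [Kstrr, SimpleGraph.fromRel_adj]
  have hsum : ∀ (m : ℕ), r ≤ m → ∀ (c : ℝ),
      (∑ a : Fin m, (if a.val < r then (1:ℝ) else 0) * c) = r * c := by
    intro m h c
    rw [← Finset.sum_mul]
    congr 1
    rw [Finset.sum_boole, aux_card_filter_lt m r h]
  have hx : ∀ (m : ℕ), r ≤ m → ∀ (c d : ℝ),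
      (∑ a : Fin m, (c + (if a.val < r then (1:ℝ) else 0) * d)) = m * c + r * d := by
    intro m h c d
    rw [Finset.sum_add_distrib, hsum m h d, Finset.sum_const, card_univ, Fintype.card_fin,
      nsmul_eq_mul]
  simp only [dotProduct, Matrix.mulVec, tv, Fintype.sum_option, Fintype.sum_sum_type,
    Option.elim, Sum.elim_inl, Sum.elim_inr, e1, e2, e3, e4, e5, e6, e7, e8, e9,
    zero_mul, one_mul, zero_add, add_zero]
  simp only [Finset.sum_const_zero, zero_add, add_zero]
  have A1 : ∑ x : Fin s, α * ((if (x:ℕ) < r then (1:ℝ) else 0) * γ + ∑ _x : Fin t, β)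
      = ↑s * (α * (↑t * β)) + ↑r * (γ * α) := by
    rw [← hx s hrs (α * (↑t * β)) (γ * α)]
    apply Finset.sum_congr rfl; intro a _
    rw [Finset.sum_const, card_univ, Fintype.card_fin, nsmul_eq_mul]
    split_ifs <;> ring
  have A2 : ∑ x : Fin t, β * ((if (x:ℕ) < r then (1:ℝ) else 0) * γ + ∑ _x : Fin s, α)
      = ↑t * (β * (↑s * α)) + ↑r * (γ * β) := by
    rw [← hx t hrt (β * (↑s * α)) (γ * β)]
    apply Finset.sum_congr rfl; intro a _
    rw [Finset.sum_const, card_univ, Fintype.card_fin, nsmul_eq_mul]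
    split_ifs <;> ring
  rw [hsum s hrs α, hsum t hrt β, A1, A2]
  ring

lemma aux_norm_form (s t : ℕ) (α β γ : ℝ) :
    tv s t α β γ ⬝ᵥ tv s t α β γ = s * α^2 + t * β^2 + γ^2 := by
  simp only [dotProduct, tv, Fintype.sum_option, Fintype.sum_sum_type,
    Option.elim, Sum.elim_inl, Sum.elim_inr, Finset.sum_const, card_univ, Fintype.card_fin,
    nsmul_eq_mul]
  ring

end AuxLemmas

lemma aux_alg_even (a r : ℝ) (ha : a ≠ 0) :
    (2*((a+1)/2 - 1)*((a+1)/2)*(1*(1-1/a)) + 2*r*((1/a)*(1+(1-1/a))))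
      - (a/2 - 1/(4*a)) * (((a+1)/2 - 1)*1^2 + (a+1)/2*(1-1/a)^2 + (1/a)^2)
      = (3*a - (16*r+1)*a^2 + (32*r-4)*a^3) / (8*a^4) := by
  field_simp
  ring

lemma aux_key_even (a r : ℝ) (ha47 : 47 ≤ a) (hr : 1 ≤ r) :
    (a/2 - 1/(4*a)) * (((a+1)/2 - 1)*1^2 + (a+1)/2*(1-1/a)^2 + (1/a)^2)
      < 2*((a+1)/2 - 1)*((a+1)/2)*(1*(1-1/a)) + 2*r*((1/a)*(1+(1-1/a))) := by
  have ha0 : (0:ℝ) < a := by linarith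
  rw [← sub_pos, aux_alg_even a r (ne_of_gt ha0)]
  apply div_pos ?_ (by positivity)
  have h1 : 16*r+1 ≤ (32*r-4)*a := by
    nlinarith [mul_le_mul_of_nonneg_left ha47 (show (0:ℝ) ≤ 32*r-4 by linarith)]
  have h2 : (0:ℝ) ≤ a * ((32*r-4)*a - (16*r+1)) :=
    mul_nonneg ha0.le (sub_nonneg.mpr h1)
  nlinarith [h2, ha0, mul_nonneg ha0.le h2]

lemma aux_key_odd (a r : ℝ) (ha46 : 46 ≤ a) (hr : 1 ≤ r) :
    (a/2) * ((a/2) * 1^2 + (a/2) * 1^2 + (1/a)^2)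
      < 2*(a/2)*(a/2)*(1*1) + 2*r*((1/a)*(1+1)) := by
  have ha0 : (0:ℝ) < a := by linarith
  rw [← sub_pos]
  have hexp : (2*(a/2)*(a/2)*(1*1) + 2*r*((1/a)*(1+1)))
      - (a/2) * ((a/2) * 1^2 + (a/2) * 1^2 + (1/a)^2) = (4*r*a - a/2) / a^2 := by
    field_simp
    ring
  rw [hexp]
  apply div_pos ?_ (by positivity)
  nlinarith

lemma aux_final_even (a ρ : ℝ) (ha47 : 47 ≤ a) (hρ : a/2 - 1/(4*a) < ρ) :
    (a^2-1)/4 < ρ^2 := by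
  have ha0 : (0:ℝ) < a := by linarith
  have hT2 : (a/2 - 1/(4*a))^2 = a^2/4 - 1/4 + (1/(4*a))^2 := by field_simp; ring
  have h1 : 1/(4*a) ≤ 1 := by rw [div_le_one (by linarith)]; linarith
  have hT0 : (0:ℝ) < a/2 - 1/(4*a) := by linarith
  nlinarith [sq_nonneg (1/(4*a)), hT2, hρ, hT0]

lemma aux_final_odd (a ρ : ℝ) (ha0 : 0 < a) (hρ : a/2 < ρ) : (a/2)^2 < ρ^2 := by
  nlinarith [hρ, ha0]

lemma aux_part2 (a r : ℝ) (ha47 : 47 ≤ a) (hr : 1 ≤ r) (hara : 8*r^2 + 8*r + 31 ≤ a) :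
    a / 2 - 1 / (4 * a) > 4 * (r ^ 2 + r + 2) := by
  have h4a : (0:ℝ) < 4*a := by linarith
  have hsmall : 1/(4*a) ≤ 1 := by rw [div_le_one h4a]; linarith
  linarith

set_option maxHeartbeats 1000000 in
/-- Lower bounds for the spectral radius of the balanced graph
`K_{⌊(n−1)/2⌋,⌈(n−1)/2⌉}^{r,r}`. -/
theorem specRad_balanced_Kstrr_lower (r n : ℕ) (hr : 1 ≤ r)
    (hn : 8 * (r ^ 2 + r + 4) ≤ n) :
    specRad (Kstrr ((n - 1) / 2) (n / 2) r) > ((n : ℝ) - 1) / 2 - 1 / (4 * ((n : ℝ) - 1)) ∧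
      ((n : ℝ) - 1) / 2 - 1 / (4 * ((n : ℝ) - 1)) > 4 * ((r : ℝ) ^ 2 + (r : ℝ) + 2) ∧
      specRad (Kstrr ((n - 1) / 2) (n / 2) r) ^ 2 > (((n - 1) ^ 2 / 4 : ℕ) : ℝ) := by
  classical
  have hnat : r ≤ (n-1)/2 ∧ r ≤ n/2 ∧ 48 ≤ n := by
    have h1 : r ≤ r^2 := by nlinarith
    have h2 : 1 ≤ r^2 := by nlinarith
    have hn' := hn
    generalize r^2 = q at h1 h2 hn'
    omega
  obtain ⟨hrs, hrt, hn48⟩ := hnat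
  set a : ℝ := (n : ℝ) - 1 with ha
  have hnR : (48:ℝ) ≤ (n:ℝ) := by exact_mod_cast hn48
  have ha47 : (47:ℝ) ≤ a := by rw [ha]; linarith
  have ha0 : (0:ℝ) < a := by linarith
  have hrR : (1:ℝ) ≤ (r:ℝ) := by exact_mod_cast hr
  have hara : 8*(r:ℝ)^2 + 8*(r:ℝ) + 31 ≤ a := by
    have : (8:ℝ)*((r:ℝ)^2+(r:ℝ)+4) ≤ (n:ℝ) := by exact_mod_cast hn
    rw [ha]; linarith
  have part2 : a / 2 - 1 / (4 * a) > 4 * ((r : ℝ) ^ 2 + (r : ℝ) + 2) :=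
    aux_part2 a r ha47 hrR hara
  obtain ⟨μ, hμmem, hray⟩ := aux_top_eigen (aux_adjMat_isHermitian (Kstrr ((n-1)/2) (n/2) r))
  have hρμ : μ ≤ specRad (Kstrr ((n-1)/2) (n/2) r) :=
    le_csSup (aux_specRad_bddAbove _) hμmem
  clear hμmem
  rcases Nat.even_or_odd n with he | ho
  · -- n even
    obtain ⟨k, hk⟩ := he
    have hk24 : 24 ≤ k := by omega
    have hs : (n-1)/2 = k-1 := by omega
    have ht : n/2 = k := by omega
    have hfl : (n-1)^2/4 = (k-1)^2 + (k-1) := by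
      have h1 : n - 1 = 2*(k-1)+1 := by omega
      rw [h1]
      have h2 : (2*(k-1)+1)^2 = 4*((k-1)^2+(k-1)) + 1 := by ring
      rw [h2]
      omega
    have hak : a = 2*(k:ℝ) - 1 := by
      rw [ha]
      have : (n:ℝ) = (k:ℝ) + (k:ℝ) := by exact_mod_cast hk
      linarith
    have hk1R : ((k-1 : ℕ):ℝ) = (k:ℝ) - 1 := by
      rw [Nat.cast_sub (by omega : 1 ≤ k)]; norm_num
    have hsR : (((n-1)/2 : ℕ):ℝ) = (k:ℝ) - 1 := by rw [hs, hk1R]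
    have htR : ((n/2 : ℕ):ℝ) = (k:ℝ) := by rw [ht]
    have hflR : (((n-1)^2/4 : ℕ):ℝ) = ((k:ℝ)-1)^2 + ((k:ℝ)-1) := by
      rw [hfl]; push_cast; rw [hk1R]
    have hQ := aux_quad_form ((n-1)/2) (n/2) r 1 (1-1/a) (1/a) hrs hrt
    have hN := aux_norm_form ((n-1)/2) (n/2) 1 (1-1/a) (1/a)
    rw [hsR, htR] at hQ hN
    have hray' := hray (tv ((n-1)/2) (n/2) 1 (1-1/a) (1/a))
    rw [hQ, hN] at hray'
    clear hray hQ hN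
    have hNpos : (0:ℝ) < ((k:ℝ)-1) * 1^2 + (k:ℝ) * (1-1/a)^2 + (1/a)^2 := by
      have hkR : (24:ℝ) ≤ (k:ℝ) := by exact_mod_cast hk24
      have h1 : (0:ℝ) < (1/a)^2 := by positivity
      nlinarith [sq_nonneg (1-1/a)]
    have hkey : (a/2 - 1/(4*a)) * (((k:ℝ)-1) * 1^2 + (k:ℝ) * (1-1/a)^2 + (1/a)^2)
        < 2*((k:ℝ)-1)*(k:ℝ)*(1*(1-1/a)) + 2*(r:ℝ)*((1/a)*(1+(1-1/a))) := by
      have hk' : (k:ℝ) = (a+1)/2 := by rw [hak]; ring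
      rw [hk']
      exact aux_key_even a r ha47 hrR
    have hμT : a/2 - 1/(4*a) < μ :=
      lt_of_mul_lt_mul_right (lt_of_lt_of_le hkey hray') (le_of_lt hNpos)
    have hρT : a/2 - 1/(4*a) < specRad (Kstrr ((n-1)/2) (n/2) r) := lt_of_lt_of_le hμT hρμ
    refine ⟨hρT, part2, ?_⟩
    rw [hflR]
    have hfla : ((k:ℝ)-1)^2 + ((k:ℝ)-1) = (a^2-1)/4 := by rw [hak]; ring
    rw [hfla]
    exact aux_final_even a _ ha47 hρT
  · -- n odd
    obtain ⟨k, hk⟩ := ho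
    have hs : (n-1)/2 = k := by omega
    have ht : n/2 = k := by omega
    have hfl : (n-1)^2/4 = k^2 := by
      have h1 : n - 1 = 2*k := by omega
      rw [h1]
      have h2 : (2*k)^2 = 4*k^2 := by ring
      rw [h2]
      omega
    have hak : a = 2*(k:ℝ) := by
      rw [ha]
      have : (n:ℝ) = 2*(k:ℝ) + 1 := by exact_mod_cast hk
      linarith
    have hsR : (((n-1)/2 : ℕ):ℝ) = (k:ℝ) := by rw [hs]
    have htR : ((n/2 : ℕ):ℝ) = (k:ℝ) := by rw [ht]
    have hflR : (((n-1)^2/4 : ℕ):ℝ) = (k:ℝ)^2 := by rw [hfl]; push_cast; ring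
    have hQ := aux_quad_form ((n-1)/2) (n/2) r 1 1 (1/a) hrs hrt
    have hN := aux_norm_form ((n-1)/2) (n/2) 1 1 (1/a)
    rw [hsR, htR] at hQ hN
    have hray' := hray (tv ((n-1)/2) (n/2) 1 1 (1/a))
    rw [hQ, hN] at hray'
    clear hray hQ hN
    have hNpos : (0:ℝ) < (k:ℝ) * 1^2 + (k:ℝ) * 1^2 + (1/a)^2 := by
      have hkR : (46:ℝ) ≤ 2*(k:ℝ) := by rw [← hak]; linarith
      have h1 : (0:ℝ) < (1/a)^2 := by positivity
      nlinarith
    have hkey : (a/2) * ((k:ℝ) * 1^2 + (k:ℝ) * 1^2 + (1/a)^2)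
        < 2*(k:ℝ)*(k:ℝ)*(1*1) + 2*(r:ℝ)*((1/a)*(1+1)) := by
      have hk' : (k:ℝ) = a/2 := by rw [hak]; ring
      rw [hk']
      exact aux_key_odd a r (le_trans (by norm_num) ha47) hrR
    have hμT : a/2 < μ :=
      lt_of_mul_lt_mul_right (lt_of_lt_of_le hkey hray') (le_of_lt hNpos)
    have hρT : a/2 < specRad (Kstrr ((n-1)/2) (n/2) r) := lt_of_lt_of_le hμT hρμ
    have hT0lt : a/2 - 1/(4*a) < a/2 :=
      sub_lt_self _ (by positivity)
    refine ⟨lt_trans hT0lt hρT, part2, ?_⟩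
    rw [hflR]
    have hk' : (k:ℝ) = a/2 := by rw [hak]; ring
    rw [hk']
    exact aux_final_odd a _ ha0 hρT
end

section
/- Let r ≥ 1 and n ≥ 8(r²+r+4) be integers, and let G* be a graph attaining the maximum spectral radius among all non-bipartite B_{r+1}-free graphs of order n. Then G* is connected. -/
open Finset Matrix

open scoped Classical in
lemma adjMat_apply {V : Type*} (G : SimpleGraph V) (i j : V) :
    adjMat G i j = if G.Adj i j then 1 else 0 := by
  unfold adjMat
  rw [SimpleGraph.adjMatrix_apply]

open scoped Classical in
lemma quad_eq {n : ℕ} (G : SimpleGraph (Fin n)) (x : Fin n → ℝ) :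
    (adjMat G *ᵥ x) ⬝ᵥ x = ∑ i, ∑ j, (if G.Adj i j then x j * x i else 0) := by
  simp only [dotProduct, Matrix.mulVec, Finset.sum_mul, adjMat_apply,
    ite_mul, one_mul, zero_mul]

open scoped RealInnerProductSpace in
lemma specRad_key {n : ℕ} (hn : 0 < n) (G : SimpleGraph (Fin n)) :
    (∃ v : Fin n → ℝ, v ≠ 0 ∧ adjMat G *ᵥ v = specRad G • v) ∧
    (∀ x : Fin n → ℝ, (adjMat G *ᵥ x) ⬝ᵥ x ≤ specRad G * (x ⬝ᵥ x)) := by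
  classical
  haveI : Nontrivial (EuclideanSpace ℝ (Fin n)) := by
    refine ⟨(WithLp.equiv 2 _).symm 0, (WithLp.equiv 2 _).symm (fun _ => 1), fun h => ?_⟩
    have := congrFun ((WithLp.equiv 2 (Fin n → ℝ)).symm.injective h) ⟨0, hn⟩
    simp at this
  set A := adjMat G with hAdef
  have hA : A.IsHermitian := by
    have hs : A.IsSymm := by
      unfold A
      unfold adjMat
      exact SimpleGraph.isSymm_adjMatrix _
    ext i j
    simp [Matrix.conjTranspose_apply, ← Matrix.IsSymm.apply hs i j]
  set T := Matrix.toEuclideanLin A with hTdef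
  have hT : T.IsSymmetric := Matrix.isHermitian_iff_isSymmetric.mp hA
  set μ : ℝ := ⨆ x : { x : EuclideanSpace ℝ (Fin n) // x ≠ 0 },
      RCLike.re ⟪T x, x⟫ / ‖(x : EuclideanSpace ℝ (Fin n))‖ ^ 2 with hμdef
  have bdd : BddAbove (Set.range fun x : { x : EuclideanSpace ℝ (Fin n) // x ≠ 0 } =>
      RCLike.re ⟪T x, x⟫ / ‖(x : EuclideanSpace ℝ (Fin n))‖ ^ 2) := by
    refine ⟨‖LinearMap.toContinuousLinearMap T‖, ?_⟩
    rintro t ⟨⟨x, hx⟩, rfl⟩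
    have hx0 : (0:ℝ) < ‖x‖ ^ 2 := pow_pos (norm_pos_iff.mpr hx) 2
    rw [div_le_iff₀ hx0]
    have h1 : ⟪T x, x⟫ ≤ ‖T x‖ * ‖x‖ := real_inner_le_norm _ _
    have h2 : ‖T x‖ ≤ ‖LinearMap.toContinuousLinearMap T‖ * ‖x‖ :=
      (LinearMap.toContinuousLinearMap T).le_opNorm x
    have h3 : ‖T x‖ * ‖x‖ ≤ ‖LinearMap.toContinuousLinearMap T‖ * ‖x‖ * ‖x‖ := by
      nlinarith [norm_nonneg x, norm_nonneg (T x)]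
    simp only [RCLike.re_to_real]
    nlinarith
  have hub : ∀ x : EuclideanSpace ℝ (Fin n), x ≠ 0 → ⟪T x, x⟫ ≤ μ * ‖x‖ ^ 2 := by
    intro x hx
    have := le_ciSup bdd ⟨x, hx⟩
    have hx0 : (0:ℝ) < ‖x‖ ^ 2 := pow_pos (norm_pos_iff.mpr hx) 2
    rw [div_le_iff₀ hx0] at this
    simpa [hμdef] using this
  obtain ⟨v, hv⟩ := (hT.hasEigenvalue_iSup_of_finiteDimensional).exists_hasEigenvector
  have hveq : T v = μ • v := hv.apply_eq_smul
  set v' : Fin n → ℝ := WithLp.equiv 2 (Fin n → ℝ) v with hv'def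
  have hv'ne : v' ≠ 0 := by
    intro h
    exact hv.2 ((WithLp.equiv 2 (Fin n → ℝ)).injective (by exact h))
  have hev' : A *ᵥ v' = μ • v' := by
    have := congrArg (WithLp.equiv 2 (Fin n → ℝ)) hveq
    exact this
  set S : Set ℝ := {t : ℝ | ∃ w : Fin n → ℝ, w ≠ 0 ∧ A *ᵥ w = t • w} with hSdef
  have hμS : μ ∈ S := ⟨v', hv'ne, hev'⟩
  have hubS : ∀ t ∈ S, t ≤ μ := by
    rintro t ⟨w, hw, hwe⟩
    set w₂ : EuclideanSpace ℝ (Fin n) := (WithLp.equiv 2 (Fin n → ℝ)).symm w with hw₂def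
    have hw₂ : w₂ ≠ 0 := by
      intro h
      exact hw (congrArg (WithLp.equiv 2 (Fin n → ℝ)) h)
    have hTw : T w₂ = t • w₂ := by
      show (WithLp.equiv 2 (Fin n → ℝ)).symm (A *ᵥ w) = t • w₂
      rw [hwe]
      rfl
    have hin : ⟪T w₂, w₂⟫ = t * ‖w₂‖ ^ 2 := by
      rw [hTw, real_inner_smul_left, real_inner_self_eq_norm_sq]
    have h2 := hub w₂ hw₂
    rw [hin] at h2
    have hpos : (0:ℝ) < ‖w₂‖ ^ 2 := pow_pos (norm_pos_iff.mpr hw₂) 2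
    exact le_of_mul_le_mul_right (by linarith) hpos
  have hspec : specRad G = μ := by
    have h1 : sSup S ≤ μ := csSup_le ⟨μ, hμS⟩ hubS
    have h2 : μ ≤ sSup S := le_csSup ⟨μ, hubS⟩ hμS
    rw [specRad]
    exact le_antisymm h1 h2
  constructor
  · exact ⟨v', hv'ne, by rw [hspec]; exact hev'⟩
  · intro x
    by_cases hx : x = 0
    · subst hx; simp
    set x₂ : EuclideanSpace ℝ (Fin n) := (WithLp.equiv 2 (Fin n → ℝ)).symm x with hx₂def
    have hx₂ : x₂ ≠ 0 := by
      intro h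
      exact hx (congrArg (WithLp.equiv 2 (Fin n → ℝ)) h)
    have h1 := hub x₂ hx₂
    have e1 : ⟪T x₂, x₂⟫ = (A *ᵥ x) ⬝ᵥ x := by
      show x ⬝ᵥ star (A *ᵥ x) = _
      rw [star_trivial, dotProduct_comm]
    have e2 : ‖x₂‖ ^ 2 = x ⬝ᵥ x := by
      rw [← real_inner_self_eq_norm_sq]
      show x ⬝ᵥ star x = _
      rw [star_trivial]
    rw [e1, e2] at h1
    rw [hspec]
    exact h1

open scoped Classical in
lemma exists_good_vector {n : ℕ} (hn : 0 < n) (G : SimpleGraph (Fin n))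
    (hdis : ∃ x y : Fin n, ¬ G.Reachable x y) :
    ∃ (u : Fin n → ℝ) (p q : Fin n),
      (adjMat G *ᵥ u) ⬝ᵥ u = specRad G * (u ⬝ᵥ u) ∧ 0 < u p ∧ u q = 0 ∧
      (∀ i, G.Adj q i → u i = 0) ∧ ¬ G.Reachable p q := by
  obtain ⟨x₀, y₀, hxy⟩ := hdis
  obtain ⟨⟨v, hvne, hveig⟩, hray⟩ := specRad_key hn G
  set lam := specRad G with hlam
  set w : Fin n → ℝ := fun i => |v i| with hwdef
  have hww : w ⬝ᵥ w = v ⬝ᵥ v := by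
    unfold dotProduct
    exact Finset.sum_congr rfl fun i _ => abs_mul_abs_self (v i)
  have hQv : (adjMat G *ᵥ v) ⬝ᵥ v = lam * (v ⬝ᵥ v) := by
    rw [hveig, smul_dotProduct]
    rfl
  have hQw_ge : lam * (w ⬝ᵥ w) ≤ (adjMat G *ᵥ w) ⬝ᵥ w := by
    rw [hww, ← hQv, quad_eq, quad_eq]
    refine Finset.sum_le_sum fun i _ => Finset.sum_le_sum fun j _ => ?_
    by_cases h : G.Adj i j
    · simp only [h, if_true, hwdef]
      calc v j * v i ≤ |v j * v i| := le_abs_self _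
        _ = |v j| * |v i| := abs_mul _ _
    · simp [h]
  have hQw : (adjMat G *ᵥ w) ⬝ᵥ w = lam * (w ⬝ᵥ w) := le_antisymm (hray w) hQw_ge
  set u1 : Fin n → ℝ := fun i => if G.Reachable x₀ i then w i else 0 with hu1
  set u2 : Fin n → ℝ := fun i => if G.Reachable x₀ i then 0 else w i with hu2
  have hsplitQ : (adjMat G *ᵥ w) ⬝ᵥ w = (adjMat G *ᵥ u1) ⬝ᵥ u1 + (adjMat G *ᵥ u2) ⬝ᵥ u2 := by
    rw [quad_eq, quad_eq, quad_eq, ← Finset.sum_add_distrib]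
    refine Finset.sum_congr rfl fun i _ => ?_
    rw [← Finset.sum_add_distrib]
    refine Finset.sum_congr rfl fun j _ => ?_
    by_cases h : G.Adj i j
    · have hij : G.Reachable x₀ i ↔ G.Reachable x₀ j :=
        ⟨fun hr => hr.trans h.reachable, fun hr => hr.trans h.symm.reachable⟩
      by_cases hri : G.Reachable x₀ i
      · have hrj : G.Reachable x₀ j := hij.mp hri
        simp [h, hu1, hu2, hri, hrj]
      · have hrj : ¬ G.Reachable x₀ j := fun hr => hri (hij.mpr hr)
        simp [h, hu1, hu2, hri, hrj]
    · simp [h]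
  have hsplitD : w ⬝ᵥ w = u1 ⬝ᵥ u1 + u2 ⬝ᵥ u2 := by
    unfold dotProduct
    rw [← Finset.sum_add_distrib]
    refine Finset.sum_congr rfl fun i _ => ?_
    by_cases hri : G.Reachable x₀ i <;> simp [hu1, hu2, hri]
  have h1 := hray u1
  have h2 := hray u2
  have hQu1 : (adjMat G *ᵥ u1) ⬝ᵥ u1 = lam * (u1 ⬝ᵥ u1) := by
    rw [hsplitD] at hQw; rw [hsplitQ] at hQw; linarith [mul_add lam (u1 ⬝ᵥ u1) (u2 ⬝ᵥ u2)]
  have hQu2 : (adjMat G *ᵥ u2) ⬝ᵥ u2 = lam * (u2 ⬝ᵥ u2) := by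
    rw [hsplitD] at hQw; rw [hsplitQ] at hQw; linarith [mul_add lam (u1 ⬝ᵥ u1) (u2 ⬝ᵥ u2)]
  obtain ⟨a, hva⟩ := Function.ne_iff.mp hvne
  have hwa : 0 < w a := abs_pos.mpr hva
  by_cases hra : G.Reachable x₀ a
  · refine ⟨u1, a, y₀, hQu1, ?_, ?_, ?_, ?_⟩
    · simpa [hu1, hra] using hwa
    · simp [hu1, hxy]
    · intro i hadj
      have : ¬ G.Reachable x₀ i := fun hr => hxy (hr.trans hadj.reachable.symm)
      simp [hu1, this]
    · exact fun h => hxy (hra.trans h)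
  · refine ⟨u2, a, x₀, hQu2, ?_, ?_, ?_, ?_⟩
    · simpa [hu2, hra] using hwa
    · have hrefl : G.Reachable x₀ x₀ := SimpleGraph.Reachable.refl _
      simp [hu2, hrefl]
    · intro i hadj
      simp [hu2, hadj.reachable]
    · exact fun h => hra h.symm

lemma book_triangle (r : ℕ) (a b : Fin (r + 3)) (hab : (bookGraph r).Adj a b) :
    ∃ z, (bookGraph r).Adj a z ∧ (bookGraph r).Adj b z := by
  have hAdj : ∀ u z : Fin (r + 3), (u : ℕ) ≠ (z : ℕ) → ((u : ℕ) < 2 ∨ (z : ℕ) < 2) →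
      (bookGraph r).Adj u z := by
    intro u z h1 h2
    rw [bookGraph, SimpleGraph.fromRel_adj]
    exact ⟨fun h => h1 (congrArg Fin.val h), h2⟩
  rw [bookGraph, SimpleGraph.fromRel_adj] at hab
  obtain ⟨hne, hlt⟩ := hab
  have hne' : (a : ℕ) ≠ (b : ℕ) := fun h => hne (Fin.ext h)
  by_cases ha : (a : ℕ) < 2
  · by_cases hb : (b : ℕ) < 2
    · exact ⟨⟨2, by omega⟩, hAdj a _ (by simp; omega) (Or.inl ha),
        hAdj b _ (by simp; omega) (Or.inl hb)⟩
    · exact ⟨⟨1 - a.val, by omega⟩, hAdj a _ (by simp; omega) (Or.inl ha),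
        hAdj b _ (by simp; omega) (Or.inr (by simp))⟩
  · have hb : (b : ℕ) < 2 := by omega
    exact ⟨⟨1 - b.val, by omega⟩, hAdj a _ (by simp; omega) (Or.inr (by simp)),
      hAdj b _ (by simp; omega) (Or.inl hb)⟩

/-- A spectral-extremal non-bipartite `B_{r+1}`-free graph is connected. -/
theorem extremal_connected (r n : ℕ) (hr : 1 ≤ r) (hn : 8 * (r ^ 2 + r + 4) ≤ n)
    (G : SimpleGraph (Fin n)) (hnonbip : ¬ G.Colorable 2) (hfree : Free (bookGraph r) G)
    (hmax : ∀ H : SimpleGraph (Fin n), ¬ H.Colorable 2 → Free (bookGraph r) H →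
      specRad H ≤ specRad G) :
    G.Connected := by
  classical
  have hn0 : 0 < n := by nlinarith
  by_contra hcon
  have hdis : ∃ x y : Fin n, ¬ G.Reachable x y := by
    by_contra h
    push_neg at h
    exact hcon ((SimpleGraph.connected_iff G).mpr ⟨fun x y => h x y, ⟨⟨0, hn0⟩⟩⟩)
  obtain ⟨u, p, q, hQu, hup, huq, hAq, hnreach⟩ := exists_good_vector hn0 G hdis
  set lam := specRad G with hlam
  have hpq : p ≠ q := fun h => hnreach (h ▸ SimpleGraph.Reachable.refl p)
  have hnadj : ¬ G.Adj p q := fun h => hnreach h.reachable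
  have hnadj' : ¬ G.Adj q p := fun h => hnreach h.symm.reachable
  -- lam ≥ 0
  have hlam0 : 0 ≤ lam := by
    have h0 := (specRad_key hn0 G).2 (Pi.single p 1)
    have hL : (adjMat G *ᵥ (Pi.single p 1 : Fin n → ℝ)) ⬝ᵥ (Pi.single p 1) = 0 := by
      rw [quad_eq]
      apply Finset.sum_eq_zero
      intro i _
      apply Finset.sum_eq_zero
      intro j _
      by_cases h : G.Adj i j
      · rw [if_pos h]
        by_cases hip : i = p
        · have : j ≠ p := fun hjp => (G.ne_of_adj h) (hip.trans hjp.symm)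
          rw [Pi.single_eq_of_ne this, zero_mul]
        · rw [Pi.single_eq_of_ne hip, mul_zero]
      · rw [if_neg h]
    have hR : (Pi.single p 1 : Fin n → ℝ) ⬝ᵥ (Pi.single p 1) = 1 := by
      rw [dotProduct_single, Pi.single_eq_same, one_mul]
    rw [hL, hR, mul_one] at h0
    exact h0
  -- the new graph H
  set H : SimpleGraph (Fin n) := SimpleGraph.fromRel (fun a b => G.Adj a b ∨ (a = p ∧ b = q))
    with hHdef
  have hHadj : ∀ a b, H.Adj a b ↔ (G.Adj a b ∨ (a = p ∧ b = q) ∨ (a = q ∧ b = p)) := by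
    intro a b
    rw [hHdef, SimpleGraph.fromRel_adj]
    constructor
    · rintro ⟨hne, (h | h) | (h | h)⟩
      · exact Or.inl h
      · exact Or.inr (Or.inl h)
      · exact Or.inl h.symm
      · exact Or.inr (Or.inr ⟨h.2, h.1⟩)
    · rintro (h | ⟨rfl, rfl⟩ | ⟨rfl, rfl⟩)
      · exact ⟨G.ne_of_adj h, Or.inl (Or.inl h)⟩
      · exact ⟨hpq, Or.inl (Or.inr ⟨rfl, rfl⟩)⟩
      · exact ⟨fun h => hpq h.symm, Or.inr (Or.inr ⟨rfl, rfl⟩)⟩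
  have hGH : G ≤ H := fun {a b} h => (hHadj a b).mpr (Or.inl h)
  have hHnonbip : ¬ H.Colorable 2 := fun h => hnonbip (h.mono_left hGH)
  have hHfree : Free (bookGraph r) H := by
    rintro ⟨f, hf⟩
    by_cases hall : ∀ a b : Fin (r + 3), (bookGraph r).Adj a b → G.Adj (f a) (f b)
    · exact hfree ⟨⟨⇑f, fun {a b} h => hall a b h⟩, hf⟩
    · push_neg at hall
      obtain ⟨a, b, hab, hnG⟩ := hall
      obtain ⟨z, haz, hbz⟩ := book_triangle r a b hab
      have h1 : H.Adj (f a) (f z) := f.map_adj haz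
      have h2 : H.Adj (f b) (f z) := f.map_adj hbz
      have hH0 : H.Adj (f a) (f b) := f.map_adj hab
      rw [hHadj] at hH0 h1 h2
      have hPQ : G.Adj p (f z) → G.Adj q (f z) → False := fun hp hq =>
        hnreach (hp.reachable.trans hq.reachable.symm)
      rcases hH0 with h | ⟨hfa, hfb⟩ | ⟨hfa, hfb⟩
      · exact hnG h
      · rw [hfa] at h1; rw [hfb] at h2
        have hGp : G.Adj p (f z) := by
          rcases h1 with h | ⟨_, hzq⟩ | ⟨hpq', _⟩
          · exact h
          · exact absurd (hf (hzq.trans hfb.symm)) (hbz.ne).symm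
          · exact absurd hpq' hpq
        have hGq : G.Adj q (f z) := by
          rcases h2 with h | ⟨hqp, _⟩ | ⟨_, hzp⟩
          · exact h
          · exact absurd hqp (fun h' => hpq h'.symm)
          · exact absurd (hf (hzp.trans hfa.symm)) (haz.ne).symm
        exact hPQ hGp hGq
      · rw [hfa] at h1; rw [hfb] at h2
        have hGq : G.Adj q (f z) := by
          rcases h1 with h | ⟨hqp, _⟩ | ⟨_, hzp⟩
          · exact h
          · exact absurd hqp (fun h' => hpq h'.symm)
          · exact absurd (hf (hzp.trans hfb.symm)) (hbz.ne).symm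
        have hGp : G.Adj p (f z) := by
          rcases h2 with h | ⟨_, hzq⟩ | ⟨hpq', _⟩
          · exact h
          · exact absurd (hf (hzq.trans hfa.symm)) (haz.ne).symm
          · exact absurd hpq' hpq
        exact hPQ hGp hGq
  -- the perturbed vector
  set ε : ℝ := u p / (lam + 1) with hε
  have hlam1 : (0:ℝ) < lam + 1 := by linarith
  have hεpos : 0 < ε := div_pos hup hlam1
  set e : Fin n → ℝ := Pi.single q 1 with hedef
  set x : Fin n → ℝ := u + ε • e with hx
  have hAuq : (adjMat G *ᵥ u) q = 0 := by
    show (fun j => adjMat G q j) ⬝ᵥ u = 0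
    unfold dotProduct
    apply Finset.sum_eq_zero
    intro j _
    show adjMat G q j * u j = 0
    by_cases h : G.Adj q j
    · rw [hAq j h, mul_zero]
    · rw [adjMat_apply, if_neg h, zero_mul]
  have hAe : adjMat G *ᵥ e = fun i => adjMat G i q := by
    rw [hedef, Matrix.mulVec_single]
    funext i
    rw [MulOpposite.op_one, one_smul]
    rfl
  have hAeu : (adjMat G *ᵥ e) ⬝ᵥ u = 0 := by
    rw [hAe]
    unfold dotProduct
    apply Finset.sum_eq_zero
    intro i _
    show adjMat G i q * u i = 0
    by_cases h : G.Adj q i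
    · rw [hAq i h, mul_zero]
    · rw [adjMat_apply, if_neg (fun h' => h h'.symm), zero_mul]
  have hAue : (adjMat G *ᵥ u) ⬝ᵥ e = 0 := by
    rw [hedef, dotProduct_single, hAuq, zero_mul]
  have hAee : (adjMat G *ᵥ e) ⬝ᵥ e = 0 := by
    rw [hedef, dotProduct_single, mul_one, hAe]
    show adjMat G q q = 0
    rw [adjMat_apply, if_neg (G.irrefl)]
  have hue : u ⬝ᵥ e = 0 := by rw [hedef, dotProduct_single, huq, zero_mul]
  have heu : e ⬝ᵥ u = 0 := by rw [hedef, single_dotProduct, huq, mul_zero]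
  have hee : e ⬝ᵥ e = 1 := by
    rw [hedef, dotProduct_single, Pi.single_eq_same, one_mul]
  have hQGx : (adjMat G *ᵥ x) ⬝ᵥ x = lam * (u ⬝ᵥ u) := by
    rw [hx, Matrix.mulVec_add, Matrix.mulVec_smul]
    rw [add_dotProduct, smul_dotProduct, dotProduct_add,
      dotProduct_add, dotProduct_smul, dotProduct_smul]
    rw [hQu, hAue, hAeu, hAee]
    simp
  have hxx : x ⬝ᵥ x = u ⬝ᵥ u + ε ^ 2 := by
    rw [hx, add_dotProduct, smul_dotProduct, dotProduct_add,
      dotProduct_add, dotProduct_smul, dotProduct_smul]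
    rw [hue, heu, hee]
    simp [smul_eq_mul]
    ring
  have hxp : x p = u p := by
    rw [hx]
    simp [hedef, Pi.single_eq_of_ne hpq]
  have hxq : x q = ε := by
    rw [hx]
    simp [hedef, huq, Pi.single_eq_same]
  -- quadratic form of H at x
  have hSnew : ∑ i, ∑ j, (if (i = p ∧ j = q) ∨ (i = q ∧ j = p) then x j * x i else 0)
      = x q * x p + x p * x q := by
    have hinner : ∀ i : Fin n,
        (∑ j, (if (i = p ∧ j = q) ∨ (i = q ∧ j = p) then x j * x i else 0))
        = (if i = p then x q * x i else 0) + (if i = q then x p * x i else 0) := by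
      intro i
      by_cases hip : i = p
      · rw [if_pos hip, if_neg (by rw [hip]; exact hpq), add_zero]
        rw [Finset.sum_eq_single q]
        · rw [if_pos (Or.inl ⟨hip, rfl⟩)]
        · intro j _ hj
          rw [if_neg]
          rintro (⟨_, h⟩ | ⟨hiq, _⟩)
          · exact hj h
          · exact hpq (hip.symm.trans hiq)
        · intro h; exact absurd (Finset.mem_univ q) h
      · by_cases hiq : i = q
        · rw [if_neg hip, if_pos hiq, zero_add]
          rw [Finset.sum_eq_single p]
          · rw [if_pos (Or.inr ⟨hiq, rfl⟩)]
          · intro j _ hj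
            rw [if_neg]
            rintro (⟨hip', _⟩ | ⟨_, h⟩)
            exacts [hip hip', hj h]
          · intro h; exact absurd (Finset.mem_univ p) h
        · rw [if_neg hip, if_neg hiq, add_zero]
          apply Finset.sum_eq_zero
          intro j _
          rw [if_neg]
          rintro (⟨h, _⟩ | ⟨h, _⟩)
          exacts [hip h, hiq h]
    rw [Finset.sum_congr rfl fun i _ => hinner i, Finset.sum_add_distrib]
    simp
  have hsplitH : ∀ i j : Fin n, (if H.Adj i j then x j * x i else 0) =
      (if G.Adj i j then x j * x i else 0) +
      (if (i = p ∧ j = q) ∨ (i = q ∧ j = p) then x j * x i else 0) := by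
    intro i j
    by_cases hg : G.Adj i j
    · have hH1 : H.Adj i j := hGH hg
      have hnew : ¬ ((i = p ∧ j = q) ∨ (i = q ∧ j = p)) := by
        rintro (⟨rfl, rfl⟩ | ⟨rfl, rfl⟩)
        exacts [hnadj hg, hnadj' hg]
      simp [hg, hH1, hnew]
    · by_cases hnew : (i = p ∧ j = q) ∨ (i = q ∧ j = p)
      · have hH1 : H.Adj i j := (hHadj i j).mpr (Or.inr hnew)
        simp [hg, hH1, hnew]
      · have hH1 : ¬ H.Adj i j := fun h => by
          rcases (hHadj i j).mp h with h' | h' | h'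
          · exact hg h'
          · exact hnew (Or.inl h')
          · exact hnew (Or.inr h')
        simp [hg, hH1, hnew]
  have hQHx : (adjMat H *ᵥ x) ⬝ᵥ x = lam * (u ⬝ᵥ u) + 2 * ε * u p := by
    rw [quad_eq]
    calc _
        = ∑ i, ∑ j, ((if G.Adj i j then x j * x i else 0) +
            (if (i = p ∧ j = q) ∨ (i = q ∧ j = p) then x j * x i else 0)) := by
          convert Finset.sum_congr rfl fun i _ => Finset.sum_congr rfl fun j _ => hsplitH i j
      _ = (∑ i, ∑ j, (if G.Adj i j then x j * x i else 0)) +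
            ∑ i, ∑ j, (if (i = p ∧ j = q) ∨ (i = q ∧ j = p) then x j * x i else 0) := by
          simp [Finset.sum_add_distrib]
      _ = lam * (u ⬝ᵥ u) + (x q * x p + x p * x q) := by
          rw [← quad_eq, hQGx, hSnew]
      _ = lam * (u ⬝ᵥ u) + 2 * ε * u p := by
          rw [hxp, hxq]; ring
  -- contradiction
  have huu : 0 ≤ u ⬝ᵥ u := Finset.sum_nonneg fun i _ => mul_self_nonneg (u i)
  have hxxpos : 0 < x ⬝ᵥ x := by rw [hxx]; nlinarith
  have hrayH := (specRad_key hn0 H).2 x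
  have hle : specRad H ≤ lam := hmax H hHnonbip hHfree
  have hkey : (adjMat H *ᵥ x) ⬝ᵥ x ≤ lam * (x ⬝ᵥ x) :=
    le_trans hrayH (mul_le_mul_of_nonneg_right hle hxxpos.le)
  rw [hQHx, hxx] at hkey
  have hstrict : lam * ε ≤ u p := by
    rw [hε, ← mul_div_assoc, div_le_iff₀ hlam1]
    nlinarith
  nlinarith [mul_le_mul_of_nonneg_right hstrict hεpos.le, mul_pos hεpos hup]
end
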